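/- arXiv:1408.5108 — 8 statements merged into one kernel-verified Lean document; each statement's English description precedes it below -/
import Mathlib

section
/- If there exists a superpermutation on n symbols of length k (with n ≥ 1), then there exists a superpermutation on n+1 symbols of length k + (n+1)!. -/
/-- A superpermutation on `n` symbols: a word over `Fin n` containing every
permutation of `Fin n` (viewed as the word `σ 0, σ 1, …, σ (n-1)`) as a
contiguous substring (infix). -/
def IsSuperperm (n : ℕ) (w : List (Fin n)) : Prop :=
  ∀ σ : Equiv.Perm (Fin n), List.ofFn ⇑σ <:+: w

/-!
Let `w` be a superpermutation on `n` symbols. For every permutation `q` of `Fin n`, pick an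
occurrence of `q` in `w` and, right after it, insert the new symbol `n` followed by another copy
of `q`. Each insertion costs `n + 1` letters, `(n + 1)!` in total, and creates the factor
`q n q`. Every permutation of `Fin (n + 1)` has the form `a n b`, which is a factor of `q n q`
for the permutation `q = b a` of the old symbols.

An insertion never destroys another occurrence: one that straddles the insertion point
reappears starting inside the inserted copy of `q`.
-/

namespace List

variable {α : Type*}

theorem exists_doubled_insertions (c : α) (n : ℕ) (v : List α) (S : Finset ℕ)
    (hS : ∀ i ∈ S, i + n ≤ v.length) :
    ∃ v' : List α, v'.length = v.length + (n + 1) * S.card ∧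
      (∀ i ∈ S, (v.drop i).take n ++ c :: (v.drop i).take n <:+: v') ∧
      v.drop (v.length - n) <:+ v' := by
  induction S using Finset.induction_on_max generalizing v with
  | empty => exact ⟨v, by simp, by simp, drop_suffix _ _⟩
  | insert m T hlt ih =>
    have hm : m + n ≤ v.length := hS m (Finset.mem_insert_self m T)
    obtain ⟨v'', hlen, hblocks, hsuf⟩ := ih (v.take (m + n)) fun i hi => by
      rw [length_take_of_le hm]
      have := hlt i hi
      omega
    have htake : ∀ i ∈ insert m T, ((v.take (m + n)).drop i).take n = (v.drop i).take n := by
      intro i hi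
      rw [drop_take, take_take]
      congr 1
      have : i ≤ m := (Finset.mem_insert.mp hi).elim (fun h => h.le) fun h => (hlt i h).le
      omega
    refine ⟨v'' ++ c :: v.drop m, ?_, ?_, ?_⟩
    · rw [Finset.card_insert_of_notMem fun h => (hlt m h).false, length_append, length_cons,
        length_drop, hlen, length_take_of_le hm, Nat.mul_succ]
      omega
    · intro i hi
      rcases Finset.mem_insert.mp hi with rfl | hiT
      · obtain ⟨s, hs⟩ : (v.drop i).take n <:+ v'' := by
          rwa [length_take_of_le hm, Nat.add_sub_cancel, drop_take,
            Nat.add_sub_cancel_left] at hsuf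
        refine ⟨s, (v.drop i).drop n, ?_⟩
        rw [← hs]
        simp
      · rw [← htake i (Finset.mem_insert_of_mem hiT)]
        exact (hblocks i hiT).trans (prefix_append _ _).isInfix
    · exact ((drop_suffix_drop_left v (by omega)).trans (suffix_cons _ _)).trans
        (suffix_append _ _)

theorem exists_length_eq_forall_doubled_infix (c : α) (n : ℕ) (v : List α)
    (F : Finset (List α)) (hF : ∀ x ∈ F, x.length = n ∧ x <:+: v) :
    ∃ v' : List α, v'.length = v.length + (n + 1) * F.card ∧
      ∀ x ∈ F, x ++ c :: x <:+: v' := by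
  have hpos : ∀ x ∈ F, ∃ i, i + n ≤ v.length ∧ (v.drop i).take n = x := by
    intro x hx
    obtain ⟨hxn, s, t, rfl⟩ := hF x hx
    refine ⟨s.length, by simp [hxn], ?_⟩
    rw [append_assoc, drop_left, ← hxn, take_left]
  choose! pos hpos_le hpos_eq using hpos
  have hinj : Set.InjOn pos F := fun x hx y hy hxy => by
    rw [← hpos_eq x hx, ← hpos_eq y hy, hxy]
  obtain ⟨v', hlen, hblocks, -⟩ := exists_doubled_insertions c n v (F.image pos) <| by
    simpa using hpos_le
  refine ⟨v', by rw [hlen, Finset.card_image_of_injOn hinj], fun x hx => ?_⟩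
  simpa [hpos_eq x hx] using hblocks (pos x) (Finset.mem_image_of_mem pos hx)

theorem Nodup.exists_perm_ofFn_eq {m : ℕ} {l : List (Fin m)} (hnd : l.Nodup)
    (hlen : l.length = m) : ∃ σ : Equiv.Perm (Fin m), ofFn σ = l := by
  classical
  have hmem : ∀ x, x ∈ l := by
    have : l.toFinset = Finset.univ := Finset.eq_univ_of_card _ <| by
      rw [toFinset_card_of_nodup hnd, hlen, Fintype.card_fin]
    simpa [Finset.ext_iff] using this
  refine ⟨(finCongr hlen.symm).trans (hnd.getEquivOfForallMemList l hmem), ?_⟩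
  apply ext_getElem <;> simp [hlen]

theorem Nodup.exists_perm_map_castSucc_ofFn_eq {n : ℕ} {l : List (Fin (n + 1))}
    (hnd : l.Nodup) (hlen : l.length = n) (hlast : Fin.last n ∉ l) :
    ∃ q : Equiv.Perm (Fin n), (ofFn q).map Fin.castSucc = l := by
  have hne : ∀ a ∈ l, a ≠ Fin.last n := fun a ha h => hlast (h ▸ ha)
  obtain ⟨q, hq⟩ := (hnd.pmap (f := Fin.castPred) (H := hne)
    fun _ _ _ _ => Fin.castPred_inj.mp).exists_perm_ofFn_eq (by simp [hlen])
  exact ⟨q, by simp [hq, map_pmap]⟩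

end List

theorem Equiv.Perm.exists_ofFn_infix_doubled {n : ℕ} (τ : Equiv.Perm (Fin (n + 1))) :
    ∃ q : Equiv.Perm (Fin n), List.ofFn τ <:+:
      (List.ofFn q).map Fin.castSucc ++ Fin.last n :: (List.ofFn q).map Fin.castSucc := by
  obtain ⟨a, b, hab⟩ :=
    List.append_of_mem (List.mem_ofFn.mpr ⟨τ.symm (Fin.last n), τ.apply_symm_apply _⟩)
  have hnd : (Fin.last n :: (a ++ b)).Nodup := by
    rw [← List.nodup_middle, ← hab]
    exact List.nodup_ofFn.mpr τ.injective
  have hlen : (b ++ a).length = n := by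
    have := congrArg List.length hab
    rw [List.length_ofFn, List.length_append, List.length_cons] at this
    rw [List.length_append]
    omega
  obtain ⟨hlast, hnd_ab⟩ := List.nodup_cons.mp hnd
  obtain ⟨q, hq⟩ := (List.nodup_append_comm.mp hnd_ab).exists_perm_map_castSucc_ofFn_eq hlen
    (by simpa [or_comm] using hlast)
  exact ⟨q, hq ▸ hab ▸ ⟨b, a, by simp⟩⟩

theorem stmt_0_general (n k : ℕ)
    (h : ∃ w : List (Fin n), IsSuperperm n w ∧ w.length = k) :
    ∃ w' : List (Fin (n + 1)), IsSuperperm (n + 1) w' ∧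
      w'.length = k + Nat.factorial (n + 1) := by
  obtain ⟨w, hw, rfl⟩ := h
  set word : Equiv.Perm (Fin n) → List (Fin (n + 1)) := fun q => (List.ofFn q).map Fin.castSucc
  have hword : Function.Injective word := fun p q hpq =>
    Equiv.coe_fn_injective <| List.ofFn_injective <|
      List.map_injective_iff.mpr (Fin.castSucc_injective n) hpq
  obtain ⟨w', hlen, hblocks⟩ := (w.map Fin.castSucc).exists_length_eq_forall_doubled_infix
    (Fin.last n) n (Finset.univ.image word) <| by
      simpa [word] using fun q => (hw q).map Fin.castSucc
  refine ⟨w', fun τ => ?_, ?_⟩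
  · obtain ⟨q, hq⟩ := τ.exists_ofFn_infix_doubled
    exact hq.trans (hblocks _ (Finset.mem_image_of_mem _ (Finset.mem_univ q)))
  · rw [hlen, Finset.card_image_of_injective _ hword, Finset.card_univ, Fintype.card_perm,
      Fintype.card_fin, List.length_map, Nat.factorial_succ]

theorem stmt_0 (n k : ℕ) (hn : 1 ≤ n)
    (h : ∃ w : List (Fin n), IsSuperperm n w ∧ w.length = k) :
    ∃ w' : List (Fin (n + 1)), IsSuperperm (n + 1) w' ∧
      w'.length = k + Nat.factorial (n + 1) :=
  stmt_0_general n k h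
end

section
/- For every n ≥ 1, there exists a superpermutation on n symbols of length ∑_{i=1}^{n} i!. -/
/-!
Read a word through a window of width `n` sliding along it. Suppose the window passes through
all `n!` arrangements of `n` letters. Add a new letter `x`: each arrangement `v` the window passed
through becomes `v x`, followed by the `n` one-letter rotations `v x → ⋯ → x v`. A step `v → v'`
that appended the chunk `s` becomes the step `x v → v' x`, which appends `s x`. Every arrangement
of the `n + 1` letters is a rotation of some `q x`, so all of them are visited. The word grows by
`n + 1` letters per old arrangement, that is by `(n + 1)!` letters in all.
-/
open List

namespace Superperm

variable {α β : Type*}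

/-- A step `(v', s)` appends the chunk `s` to the word and moves the window to `v'`, which must be
a suffix of the previous window followed by `s`. -/
inductive Tour : List α → List (List α × List α) → List α → Prop
  | nil (v : List α) : Tour v [] v
  | cons {v v' w s : List α} {steps : List (List α × List α)} :
      v' <:+ v ++ s → Tour v' steps w → Tour v ((v', s) :: steps) w

namespace Tour

variable {u v w : List α} {steps : List (List α × List α)}

theorem append {l₁ l₂ : List (List α × List α)} (h₁ : Tour u l₁ v) (h₂ : Tour v l₂ w) :
    Tour u (l₁ ++ l₂) w := by
  induction h₁ with
  | nil => exact h₂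
  | cons hs _ ih => exact cons hs (ih h₂)

theorem map (f : α → β) (h : Tour v steps w) :
    Tour (v.map f) (steps.map (Prod.map (List.map f) (List.map f))) (w.map f) := by
  induction h with
  | nil => exact nil _
  | cons hs _ ih => exact cons (by simpa using hs.map f) ih

theorem infix_of_mem (h : Tour v steps w) {p : List α × List α} (hp : p ∈ steps) :
    p.1 <:+: v ++ steps.flatMap Prod.snd := by
  induction h with
  | nil => simp at hp
  | @cons v v' w s steps hs _ ih =>
    obtain ⟨t, ht⟩ := hs
    have hsuffix : v' ++ steps.flatMap Prod.snd <:+ v ++ (s ++ steps.flatMap Prod.snd) :=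
      ⟨t, by rw [← append_assoc, ← append_assoc, ht]⟩
    rcases mem_cons.mp hp with rfl | hp
    · exact (prefix_append _ _).isInfix.trans hsuffix.isInfix
    · exact (ih hp).trans hsuffix.isInfix

end Tour

theorem rotate_one_suffix (l : List α) : l.rotate 1 <:+ l ++ l.take 1 := by
  cases l with
  | nil => simp
  | cons a t => simp

def rotSteps (l : List α) (k : ℕ) : List (List α × List α) :=
  (range k).map fun j => (l.rotate (j + 1), (l.rotate j).take 1)

theorem tour_rotSteps (l : List α) (k : ℕ) : Tour l (rotSteps l k) (l.rotate k) := by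
  induction k with
  | zero => simpa [rotSteps] using Tour.nil l
  | succ k ih =>
    rw [rotSteps, range_succ, map_append, ← rotSteps]
    refine ih.append (Tour.cons ?_ (Tour.nil _))
    simpa [rotate_rotate] using rotate_one_suffix (l.rotate k)

theorem length_rotSteps (l : List α) (k : ℕ) : (rotSteps l k).length = k := by
  simp [rotSteps]

theorem length_flatMap_snd_rotSteps {l : List α} (hl : l ≠ []) (k : ℕ) :
    ((rotSteps l k).flatMap Prod.snd).length = k := by
  simp [rotSteps, length_flatMap, Function.comp_def,
    Nat.one_le_of_lt (length_pos_iff.mpr hl)]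

theorem length_fst_of_mem_rotSteps {l : List α} {k : ℕ} {p : List α × List α}
    (hp : p ∈ rotSteps l k) : p.1.length = l.length := by
  obtain ⟨j, -, rfl⟩ := mem_map.mp hp
  simp

theorem rotate_mem_rotSteps (l : List α) {j k : ℕ} (hj : 0 < j) (hjk : j ≤ k) :
    l.rotate j ∈ (rotSteps l k).map Prod.fst := by
  obtain ⟨i, rfl⟩ := Nat.exists_eq_add_of_lt hj
  exact mem_map.mpr ⟨_, mem_map.mpr ⟨i, mem_range.mpr (by omega), rfl⟩, by simp⟩

def liftSteps (x : α) (steps : List (List α × List α)) : List (List α × List α) :=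
  steps.flatMap fun p => (p.1 ++ [x], p.2 ++ [x]) :: rotSteps (p.1 ++ [x]) p.1.length

theorem Tour.liftSteps {v w : List α} {steps : List (List α × List α)} (x : α)
    (h : Tour v steps w) : Tour (x :: v) (liftSteps x steps) (x :: w) := by
  induction h with
  | nil => exact Tour.nil _
  | @cons v v' w s steps hs _ ih =>
    obtain ⟨t, ht⟩ := hs
    refine Tour.cons ⟨x :: t, ?_⟩ ?_
    · simp only [cons_append, ← append_assoc, ht]
    · have hrot := tour_rotSteps (v' ++ [x]) v'.length
      rw [rotate_append_length_eq] at hrot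
      exact hrot.append ih

section liftSteps

variable {n : ℕ} {x : α} {steps : List (List α × List α)}

theorem length_liftSteps (h : ∀ p ∈ steps, p.1.length = n) :
    (liftSteps x steps).length = steps.length * (n + 1) := by
  induction steps with
  | nil => simp [liftSteps]
  | cons p steps ih =>
    simp only [liftSteps, flatMap_cons, length_append, length_cons, length_rotSteps] at ih ⊢
    rw [ih fun q hq => h q (mem_cons_of_mem p hq), h p mem_cons_self]
    ring

theorem length_flatMap_snd_liftSteps (h : ∀ p ∈ steps, p.1.length = n) :
    ((liftSteps x steps).flatMap Prod.snd).length =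
      (steps.flatMap Prod.snd).length + steps.length * (n + 1) := by
  induction steps with
  | nil => simp [liftSteps]
  | cons p steps ih =>
    simp only [liftSteps, flatMap_cons, flatMap_append, length_append, length_cons] at ih ⊢
    rw [ih fun q hq => h q (mem_cons_of_mem p hq),
      length_flatMap_snd_rotSteps (by simp), h p mem_cons_self]
    simp only [length_nil, zero_add, length_flatMap]
    ring

theorem length_fst_of_mem_liftSteps (h : ∀ p ∈ steps, p.1.length = n)
    {q : List α × List α} (hq : q ∈ liftSteps x steps) : q.1.length = n + 1 := by
  obtain ⟨p, hp, hq⟩ := mem_flatMap.mp hq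
  rcases mem_cons.mp hq with rfl | hq
  · simp [h p hp]
  · simpa [h p hp] using length_fst_of_mem_rotSteps hq

theorem rotate_mem_liftSteps {p : List α × List α} (hp : p ∈ steps) {j : ℕ}
    (hj : j ≤ p.1.length) : (p.1 ++ [x]).rotate j ∈ (liftSteps x steps).map Prod.fst := by
  have hsub : (p.1 ++ [x], p.2 ++ [x]) :: rotSteps (p.1 ++ [x]) p.1.length ⊆ liftSteps x steps :=
    fun q hq => mem_flatMap.mpr ⟨p, hp, hq⟩
  rcases Nat.eq_zero_or_pos j with rfl | hj0
  · simpa using mem_map_of_mem (f := Prod.fst) (hsub mem_cons_self)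
  · exact map_subset _ (fun q hq => hsub (mem_cons_of_mem _ hq)) (rotate_mem_rotSteps _ hj0 hj)

end liftSteps

def extendSteps (x : α) (v : List α) (steps : List (List α × List α)) :
    List (List α × List α) :=
  rotSteps (v ++ [x]) v.length ++ liftSteps x steps

section extendSteps

variable {n : ℕ} {x : α} {v : List α} {steps : List (List α × List α)}

theorem Tour.extendSteps {w : List α} (x : α) (h : Tour v steps w) :
    Tour (v ++ [x]) (extendSteps x v steps) (x :: w) := by
  have hrot := tour_rotSteps (v ++ [x]) v.length
  rw [rotate_append_length_eq] at hrot
  exact hrot.append (h.liftSteps x)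

theorem length_extendSteps (hv : v.length = n) (h : ∀ p ∈ steps, p.1.length = n) :
    (extendSteps x v steps).length = n + steps.length * (n + 1) := by
  rw [extendSteps, length_append, length_rotSteps, length_liftSteps h, hv]

theorem length_flatMap_snd_extendSteps (hv : v.length = n) (h : ∀ p ∈ steps, p.1.length = n) :
    ((extendSteps x v steps).flatMap Prod.snd).length =
      n + (steps.flatMap Prod.snd).length + steps.length * (n + 1) := by
  rw [extendSteps, flatMap_append, length_append, length_flatMap_snd_rotSteps (by simp),
    length_flatMap_snd_liftSteps h, hv, Nat.add_assoc]

theorem length_fst_of_mem_extendSteps (hv : v.length = n) (h : ∀ p ∈ steps, p.1.length = n)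
    {q : List α × List α} (hq : q ∈ extendSteps x v steps) : q.1.length = n + 1 := by
  rcases mem_append.mp hq with hq | hq
  · simpa [hv] using length_fst_of_mem_rotSteps hq
  · exact length_fst_of_mem_liftSteps h hq

theorem rotate_mem_extendSteps {l : List α} (hl : l = v ∨ l ∈ steps.map Prod.fst) {j : ℕ}
    (hj : j ≤ l.length) :
    (l ++ [x]).rotate j = v ++ [x] ∨
      (l ++ [x]).rotate j ∈ (extendSteps x v steps).map Prod.fst := by
  rw [extendSteps, map_append, mem_append]
  rcases hl with rfl | hl
  · rcases Nat.eq_zero_or_pos j with rfl | hj0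
    · exact .inl (rotate_zero _)
    · exact .inr (.inl (rotate_mem_rotSteps _ hj0 (by simpa using hj)))
  · obtain ⟨p, hp, rfl⟩ := mem_map.mp hl
    exact .inr (.inr (rotate_mem_liftSteps hp hj))

end extendSteps

theorem exists_eq_rotate_append_singleton {l : List α} {x : α} (hx : x ∈ l) :
    ∃ m : List α, ∃ j < l.length, l = (m ++ [x]).rotate j := by
  obtain ⟨k, hk, rfl⟩ := mem_iff_getElem.mp hx
  have hrot : l.rotate (k + 1) = l.drop (k + 1) ++ l.take k ++ [l[k]] := by
    rw [rotate_eq_drop_append_take hk, take_add_one, getElem?_eq_getElem hk]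
    simp
  refine ⟨l.drop (k + 1) ++ l.take k, l.length - (k + 1), by omega, ?_⟩
  rw [← hrot, rotate_rotate, Nat.add_sub_cancel' hk, rotate_length]

theorem exists_eq_rotate_map_castSucc {n : ℕ} {l : List (Fin (n + 1))} (hnd : l.Nodup)
    (hl : l.length = n + 1) : ∃ q : List (Fin n), q.Nodup ∧ q.length = n ∧
      ∃ j ≤ n, l = (q.map Fin.castSucc ++ [Fin.last n]).rotate j := by
  have hlast : Fin.last n ∈ l := by
    have huniv : l.toFinset = Finset.univ :=
      Finset.eq_univ_of_card _ (by rw [toFinset_card_of_nodup hnd, hl, Fintype.card_fin])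
    rw [← mem_toFinset, huniv]
    exact Finset.mem_univ _
  obtain ⟨m, j, hj, rfl⟩ := exists_eq_rotate_append_singleton hlast
  rw [nodup_rotate, nodup_append_comm, singleton_append, nodup_cons] at hnd
  have hm : m ∈ Set.range (map Fin.castSucc) := by
    rw [Set.range_list_map, Fin.range_castSucc]
    exact fun a ha => Fin.val_lt_last (ne_of_mem_of_not_mem ha hnd.1)
  obtain ⟨q, rfl⟩ := hm
  have hq : q.length = n := by simpa using hl
  exact ⟨q, hnd.2.of_map _, hq, j, by simpa [hq] using hj, rfl⟩

structure IsCoveringTour (n : ℕ) (v : List (Fin n)) (steps : List (List (Fin n) × List (Fin n))) :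
    Prop where
  tour : ∃ w, Tour v steps w
  length_start : v.length = n
  length_fst : ∀ p ∈ steps, p.1.length = n
  length_steps : steps.length + 1 = n.factorial
  covers : ∀ l : List (Fin n), l.Nodup → l.length = n → l = v ∨ l ∈ steps.map Prod.fst
  length_word : (v ++ steps.flatMap Prod.snd).length = ∑ i ∈ Finset.Icc 1 n, i.factorial

theorem isCoveringTour_zero : IsCoveringTour 0 [] [] where
  tour := ⟨[], Tour.nil []⟩
  length_start := rfl
  length_fst := by simp
  length_steps := rfl
  covers l _ hl := .inl (length_eq_zero_iff.mp hl)
  length_word := rfl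

theorem IsCoveringTour.succ {n : ℕ} {v : List (Fin n)} {steps : List (List (Fin n) × List (Fin n))}
    (h : IsCoveringTour n v steps) :
    IsCoveringTour (n + 1) (v.map Fin.castSucc ++ [Fin.last n])
      (extendSteps (Fin.last n) (v.map Fin.castSucc)
        (steps.map (Prod.map (map Fin.castSucc) (map Fin.castSucc)))) := by
  set steps' := steps.map (Prod.map (map Fin.castSucc) (map Fin.castSucc))
  have hv : (v.map Fin.castSucc).length = n := by simp [h.length_start]
  have hfst : ∀ p ∈ steps', p.1.length = n := by
    intro p' hp'
    obtain ⟨p, hp, rfl⟩ := mem_map.mp hp'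
    simpa using h.length_fst p hp
  have hlen : steps'.length = steps.length := length_map _
  have hsnd : (steps'.flatMap Prod.snd).length = (steps.flatMap Prod.snd).length := by
    simp [steps', length_flatMap, Function.comp_def]
  obtain ⟨w, hw⟩ := h.tour
  refine ⟨⟨_, (hw.map Fin.castSucc).extendSteps (Fin.last n)⟩, by simp [hv],
    fun p hp => length_fst_of_mem_extendSteps hv hfst hp, ?_, ?_, ?_⟩
  · rw [length_extendSteps hv hfst, hlen, Nat.factorial_succ, ← h.length_steps]
    ring
  · intro l hnd hl
    obtain ⟨q, hqnd, hq, j, hj, rfl⟩ := exists_eq_rotate_map_castSucc hnd hl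
    refine rotate_mem_extendSteps ?_ (by simpa [hq] using hj)
    rcases h.covers q hqnd hq with rfl | hq
    · exact .inl rfl
    · refine .inr ?_
      obtain ⟨p, hp, rfl⟩ := mem_map.mp hq
      exact mem_map.mpr ⟨_, mem_map_of_mem hp, rfl⟩
  · have hword := h.length_word
    rw [length_append, h.length_start] at hword
    rw [length_append, length_append, hv, length_singleton,
      length_flatMap_snd_extendSteps hv hfst, hsnd, hlen, Finset.sum_Icc_succ_top (by omega),
      ← hword, Nat.factorial_succ, ← h.length_steps]
    ring

theorem exists_isCoveringTour (n : ℕ) : ∃ v steps, IsCoveringTour n v steps := by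
  induction n with
  | zero => exact ⟨_, _, isCoveringTour_zero⟩
  | succ n ih =>
    obtain ⟨v, steps, h⟩ := ih
    exact ⟨_, _, h.succ⟩

end Superperm

theorem stmt_1_general (n : ℕ) :
    ∃ w : List (Fin n), IsSuperperm n w ∧
      w.length = ∑ i ∈ Finset.Icc 1 n, Nat.factorial i := by
  obtain ⟨v, steps, h⟩ := Superperm.exists_isCoveringTour n
  obtain ⟨w, hw⟩ := h.tour
  refine ⟨v ++ steps.flatMap Prod.snd, fun σ => ?_, h.length_word⟩
  rcases h.covers _ (List.nodup_ofFn.mpr σ.injective) List.length_ofFn with hσ | hσ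
  · exact hσ ▸ (List.prefix_append _ _).isInfix
  · obtain ⟨p, hp, hpσ⟩ := List.mem_map.mp hσ
    exact hpσ ▸ hw.infix_of_mem hp

theorem stmt_1 (n : ℕ) (hn : 1 ≤ n) :
    ∃ w : List (Fin n), IsSuperperm n w ∧
      w.length = ∑ i ∈ Finset.Icc 1 n, Nat.factorial i :=
  stmt_1_general n
end

section
/- Every superpermutation on 3 symbols has length at least 9. -/
lemma key : ∀ a b c d e f g h : Fin 3, ¬(([0,1,2] : List (Fin 3)) <:+: [a,b,c,d,e,f,g,h] ∧
    ([0,2,1] : List (Fin 3)) <:+: [a,b,c,d,e,f,g,h] ∧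
    ([1,0,2] : List (Fin 3)) <:+: [a,b,c,d,e,f,g,h] ∧
    ([1,2,0] : List (Fin 3)) <:+: [a,b,c,d,e,f,g,h] ∧
    ([2,0,1] : List (Fin 3)) <:+: [a,b,c,d,e,f,g,h] ∧
    ([2,1,0] : List (Fin 3)) <:+: [a,b,c,d,e,f,g,h]) := by decide

theorem stmt_5 (w : List (Fin 3)) (hw : IsSuperperm 3 w) : 9 ≤ w.length := by
  by_contra h
  push_neg at h
  obtain ⟨w', hlen, hinf⟩ : ∃ w' : List (Fin 3), w'.length = 8 ∧ w <:+: w' :=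
    ⟨w ++ List.replicate (8 - w.length) 0, by simp; omega,
      (List.prefix_append _ _).isInfix⟩
  have key6 : ∀ L : List (Fin 3), L <:+: w → L <:+: w' := fun L hL => hL.trans hinf
  obtain ⟨a, b, c, d, e, f, g, h', rfl⟩ :
      ∃ a b c d e f g h', w' = [a, b, c, d, e, f, g, h'] := by
    rcases w' with _|⟨a,_|⟨b,_|⟨c,_|⟨d,_|⟨e,_|⟨f,_|⟨g,_|⟨h',t⟩⟩⟩⟩⟩⟩⟩⟩ <;>
      simp_all
  apply key a b c d e f g h'
  refine ⟨?_, ?_, ?_, ?_, ?_, ?_⟩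
  · have := key6 _ (hw 1); simpa using this
  · have := key6 _ (hw (Equiv.swap 1 2))
    have e' : List.ofFn ⇑(Equiv.swap (1:Fin 3) 2) = [0,2,1] := by decide
    rwa [e'] at this
  · have := key6 _ (hw (Equiv.swap 0 1))
    have e' : List.ofFn ⇑(Equiv.swap (0:Fin 3) 1) = [1,0,2] := by decide
    rwa [e'] at this
  · have := key6 _ (hw (Equiv.swap 0 2 * Equiv.swap 0 1 : Equiv.Perm (Fin 3)))
    have e' : List.ofFn ⇑(Equiv.swap (0:Fin 3) 2 * Equiv.swap 0 1 : Equiv.Perm (Fin 3)) = [1,2,0] := by decide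
    rwa [e'] at this
  · have := key6 _ (hw (Equiv.swap 0 1 * Equiv.swap 0 2 : Equiv.Perm (Fin 3)))
    have e' : List.ofFn ⇑(Equiv.swap (0:Fin 3) 1 * Equiv.swap 0 2 : Equiv.Perm (Fin 3)) = [2,0,1] := by decide
    rwa [e'] at this
  · have := key6 _ (hw (Equiv.swap 0 2))
    have e' : List.ofFn ⇑(Equiv.swap (0:Fin 3) 2) = [2,1,0] := by decide
    rwa [e'] at this
end

section
/- Every superpermutation on 4 symbols has length at least 33. -/
/-!
Choose one occurrence of each of the 24 permutations and list them by position,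
`p 0 < p 1 < ⋯ < p 23`; the word has length at least `p 23 + 4`. Two windows at distance 1
differ by a rotation, so four such steps in a row would return to the same permutation:
hence `p (i + 4) ≥ p i + 5`, and `p 23 ≥ p 0 + 28`. In case of equality the first twelve gaps
are forced to be `1, 1, 1, 2` three times. A gap of 2 after three rotations cannot be a fourth
rotation, since that permutation was already seen, so it maps `a₁a₂a₃a₄` to `a₃a₄a₂a₁`;
each block of four steps then acts on positions by the 3-cycle `(0 1 2)`, and after three
blocks the first permutation recurs.
-/

open Equiv Nat

theorem List.IsInfix.exists_take_drop {α : Type*} {u w : List α} (h : u <:+: w) :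
    ∃ a, (w.drop a).take u.length = u ∧ a + u.length ≤ w.length := by
  obtain ⟨s, t, rfl⟩ := h
  exact ⟨s.length, by simp, by simp⟩

theorem IsSuperperm.exists_occurrences {n : ℕ} {w : List (Fin n)} (hw : IsSuperperm n w) :
    ∃ (p : ℕ → ℕ) (q : ℕ → Perm (Fin n)), StrictMonoOn p (Set.Iio n !) ∧
      Set.InjOn q (Set.Iio n !) ∧
      ∀ i < n !, (w.drop (p i)).take n = List.ofFn (q i) ∧ p i + n ≤ w.length := by
  choose pos hpos hle using fun σ => (hw σ).exists_take_drop
  simp only [List.length_ofFn] at hpos hle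
  have hinj : Function.Injective pos := fun σ τ h =>
    Equiv.coe_fn_injective (List.ofFn_injective (by rw [← hpos, ← hpos, h]))
  set P := Finset.univ.image pos
  have hfin : (Set.ofPred (· ∈ P)).Finite := P.finite_toSet
  have hcard : hfin.toFinset.card = n ! := by
    rw [show hfin.toFinset = P from P.finite_toSet_toFinset, Finset.card_image_of_injective _ hinj,
      Finset.card_univ, Fintype.card_perm, Fintype.card_fin]
  have hperm : ∀ i, ∃ σ, i < n ! → pos σ = Nat.nth (· ∈ P) i := fun i => by
    by_cases hi : i < (n !)
    · obtain ⟨σ, -, hσ⟩ := Finset.mem_image.1 (Nat.nth_mem_of_lt_card hfin (hcard ▸ hi))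
      exact ⟨σ, fun _ => hσ⟩
    · exact ⟨1, fun h => absurd h hi⟩
  choose q hq using hperm
  refine ⟨Nat.nth (· ∈ P), q, hcard ▸ Nat.nth_strictMonoOn hfin, fun i hi j hj hij => ?_,
    fun i hi => ?_⟩
  · exact Nat.nth_injOn hfin (hcard ▸ hi) (hcard ▸ hj) (by rw [← hq i hi, ← hq j hj, hij])
  · rw [← hq i hi]
    exact ⟨hpos _, hle _⟩

theorem List.drop_take_drop_eq {α : Type*} (w : List α) (a d n : ℕ) :
    ((w.drop a).take n).drop d = ((w.drop (a + d)).take n).take (n - d) := by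
  rw [List.drop_take, List.drop_drop, List.take_take, min_eq_left (Nat.sub_le n d), Nat.add_comm]

namespace Superperm4

theorem eq_mul_finRotate_of_drop_one (σ τ : Perm (Fin 4))
    (h : (List.ofFn σ).drop 1 = (List.ofFn τ).take 3) : τ = σ * finRotate 4 := by
  revert σ τ; decide

theorem eq_mul_finRotate_sq_of_drop_two (σ τ : Perm (Fin 4))
    (h : (List.ofFn σ).drop 2 = (List.ofFn τ).take 2) :
    τ = σ * finRotate 4 ^ 2 ∨ τ = σ * finRotate 4 ^ 2 * swap 2 3 := by
  revert σ τ; decide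

variable {w : List (Fin 4)} {p : ℕ → ℕ} {q : ℕ → Perm (Fin 4)}

theorem ofFn_drop_eq_take_ofFn (hwin : ∀ i < 24, (w.drop (p i)).take 4 = List.ofFn (q i))
    {i d : ℕ} (hi : i < 23) (hd : p (i + 1) = p i + d) :
    (List.ofFn (q i)).drop d = (List.ofFn (q (i + 1))).take (4 - d) := by
  rw [← hwin i (by omega), ← hwin (i + 1) (by omega), hd, List.drop_take_drop_eq]

theorem eq_mul_finRotate_of_gap_one (hwin : ∀ i < 24, (w.drop (p i)).take 4 = List.ofFn (q i))
    {i : ℕ} (hi : i < 23) (h : p (i + 1) = p i + 1) : q (i + 1) = q i * finRotate 4 :=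
  eq_mul_finRotate_of_drop_one _ _ (ofFn_drop_eq_take_ofFn hwin hi h)

theorem eq_mul_finRotate_pow_three (hwin : ∀ i < 24, (w.drop (p i)).take 4 = List.ofFn (q i))
    {k : ℕ} (hk : k + 3 < 24) (h₁ : p (k + 1) = p k + 1) (h₂ : p (k + 2) = p k + 2)
    (h₃ : p (k + 3) = p k + 3) :
    q (k + 1) = q k * finRotate 4 ∧ q (k + 3) = q k * finRotate 4 ^ 3 := by
  have e₁ : q (k + 1) = q k * finRotate 4 :=
    eq_mul_finRotate_of_gap_one hwin (by omega) h₁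
  have e₂ : q (k + 2) = q (k + 1) * finRotate 4 :=
    eq_mul_finRotate_of_gap_one hwin (i := k + 1) (by omega) (show p (k + 2) = _ by omega)
  have e₃ : q (k + 3) = q (k + 2) * finRotate 4 :=
    eq_mul_finRotate_of_gap_one hwin (i := k + 2) (by omega) (show p (k + 3) = _ by omega)
  exact ⟨e₁, by rw [e₃, e₂, e₁, pow_three, mul_assoc, mul_assoc]⟩

theorem add_five_le (hp : ∀ i < 23, p i < p (i + 1)) (hq : Set.InjOn q (Set.Iio 24))
    (hwin : ∀ i < 24, (w.drop (p i)).take 4 = List.ofFn (q i)) {i : ℕ} (hi : i + 4 < 24) :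
    p i + 5 ≤ p (i + 4) := by
  by_contra! h
  have : p i < p (i + 1) := hp i (by omega)
  have : p (i + 1) < p (i + 2) := hp (i + 1) (by omega)
  have : p (i + 2) < p (i + 3) := hp (i + 2) (by omega)
  have : p (i + 3) < p (i + 4) := hp (i + 3) (by omega)
  obtain ⟨-, e₃⟩ := eq_mul_finRotate_pow_three hwin (k := i) (by omega) (by omega) (by omega)
    (by omega)
  have e₄ : q (i + 4) = q (i + 3) * finRotate 4 :=
    eq_mul_finRotate_of_gap_one hwin (i := i + 3) (by omega) (show p (i + 4) = _ by omega)
  have : q (i + 4) = q i := by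
    rw [e₄, e₃, mul_assoc, ← pow_succ, show finRotate 4 ^ 4 = 1 by decide, mul_one]
  exact absurd (hq (Set.mem_Iio.2 hi) (Set.mem_Iio.2 (by omega)) this) (by omega)

theorem eq_mul_finRotate_mul_swap (hq : Set.InjOn q (Set.Iio 24))
    (hwin : ∀ i < 24, (w.drop (p i)).take 4 = List.ofFn (q i)) {k : ℕ} (hk : k + 4 < 24)
    (h₁ : p (k + 1) = p k + 1) (h₂ : p (k + 2) = p k + 2) (h₃ : p (k + 3) = p k + 3)
    (h₄ : p (k + 4) = p k + 5) : q (k + 4) = q k * (finRotate 4 * swap 2 3) := by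
  obtain ⟨e₁, e₃⟩ := eq_mul_finRotate_pow_three hwin (by omega) h₁ h₂ h₃
  have overlap := ofFn_drop_eq_take_ofFn hwin (i := k + 3) (d := 2) (by omega)
    (show p (k + 4) = _ by omega)
  rcases eq_mul_finRotate_sq_of_drop_two _ _ overlap with e₄ | e₄
  · have : q (k + 4) = q (k + 1) := by
      rw [e₄, e₃, e₁, mul_assoc,
        show finRotate 4 ^ 3 * finRotate 4 ^ 2 = finRotate 4 by decide]
    exact absurd (hq (Set.mem_Iio.2 hk) (Set.mem_Iio.2 (by omega)) this) (by omega)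
  · rw [e₄, e₃, mul_assoc, mul_assoc,
      show finRotate 4 ^ 3 * (finRotate 4 ^ 2 * swap 2 3) = finRotate 4 * swap 2 3 by decide]

theorem rotation_blocks (hp : ∀ i < 23, p i < p (i + 1))
    (h5 : ∀ i, i + 4 < 24 → p i + 5 ≤ p (i + 4)) (h : p 23 < p 0 + 29) :
    ∀ k ∈ [0, 4, 8], p (k + 1) = p k + 1 ∧ p (k + 2) = p k + 2 ∧ p (k + 3) = p k + 3 ∧
      p (k + 4) = p k + 5 := by
  -- Both chains `0, 4, …, 20, 21, 22, 23` and `0, 1, 2, 3, 7, …, 23` climb by at least 28,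
  -- so each of their steps is tight.
  have m : ∀ i ∈ [0, 1, 2, 4, 5, 6, 8, 9, 10, 20, 21, 22], p i < p (i + 1) :=
    fun i hi => hp i (by simp only [List.mem_cons, List.not_mem_nil, or_false] at hi; omega)
  have f : ∀ i ∈ [0, 3, 4, 7, 8, 11, 12, 15, 16, 19], p i + 5 ≤ p (i + 4) :=
    fun i hi => h5 i (by simp only [List.mem_cons, List.not_mem_nil, or_false] at hi; omega)
  simp only [List.mem_cons, List.not_mem_nil, or_false, forall_eq_or_imp, forall_eq,
    Nat.reduceAdd] at m f ⊢
  omega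

theorem add_twenty_nine_le (hp : ∀ i < 23, p i < p (i + 1)) (hq : Set.InjOn q (Set.Iio 24))
    (hwin : ∀ i < 24, (w.drop (p i)).take 4 = List.ofFn (q i)) : p 0 + 29 ≤ p 23 := by
  by_contra! h
  have blocks := rotation_blocks hp (fun i hi => add_five_le hp hq hwin hi) h
  simp only [List.mem_cons, List.not_mem_nil, or_false, forall_eq_or_imp, forall_eq,
    Nat.reduceAdd] at blocks
  obtain ⟨⟨a₁, a₂, a₃, a₄⟩, ⟨b₁, b₂, b₃, b₄⟩, c₁, c₂, c₃, c₄⟩ := blocks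
  have s₀ : q 4 = q 0 * (finRotate 4 * swap 2 3) :=
    eq_mul_finRotate_mul_swap hq hwin (k := 0) (by norm_num) a₁ a₂ a₃ a₄
  have s₄ : q 8 = q 4 * (finRotate 4 * swap 2 3) :=
    eq_mul_finRotate_mul_swap hq hwin (k := 4) (by norm_num) b₁ b₂ b₃ b₄
  have s₈ : q 12 = q 8 * (finRotate 4 * swap 2 3) :=
    eq_mul_finRotate_mul_swap hq hwin (k := 8) (by norm_num) c₁ c₂ c₃ c₄
  have : q 12 = q 0 := by
    rw [s₈, s₄, s₀, mul_assoc, mul_assoc, ← pow_three,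
      show (finRotate 4 * swap 2 3) ^ 3 = 1 by decide, mul_one]
  exact absurd (hq (by norm_num) (by norm_num) this) (by norm_num)

end Superperm4

theorem stmt_6 (w : List (Fin 4)) (hw : IsSuperperm 4 w) : 33 ≤ w.length := by
  obtain ⟨p, q, hp, hq, hocc⟩ := hw.exists_occurrences
  rw [show (4 : ℕ)! = 24 from rfl] at hp hq hocc
  have hlast := (hocc 23 (by norm_num)).2
  have := Superperm4.add_twenty_nine_le
    (fun i hi => hp (Set.mem_Iio.2 (by omega)) (Set.mem_Iio.2 (by omega)) (Nat.lt_succ_self i))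
    hq (fun i hi => (hocc i hi).1)
  omega
end

section
/- Let n ≥ 1 and define, for permutations s, t of Fin n (viewed as words of length n), the overlap distance d(s,t) to be the least k with 0 ≤ k ≤ n such that the suffix of s of length n−k equals the prefix of t of length n−k. Then for every list p₀, p₁, …, p_{n!−1} containing each of the n! permutations of Fin n exactly once, there exists a superpermutation on n symbols of length n + ∑_{i=0}^{n!−2} d(p_i, p_{i+1}). -/
/-- The overlap distance `d(s,t)`: the least `k` with `0 ≤ k ≤ n` such that the
suffix of `s` of length `n - k` equals the prefix of `t` of length `n - k`. -/
noncomputable def ovd (n : ℕ) (s t : List (Fin n)) : ℕ :=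
  sInf {k | k ≤ n ∧ s.drop k = t.take (n - k)}

section Overlap

variable {n : ℕ} {s t w : List (Fin n)}

lemma ovd_spec (hs : s.length ≤ n) :
    ovd n s t ≤ n ∧ s.drop (ovd n s t) = t.take (n - ovd n s t) :=
  Nat.sInf_mem (s := {k | k ≤ n ∧ s.drop k = t.take (n - k)})
    ⟨n, le_rfl, by simp [List.drop_eq_nil_of_le hs]⟩

lemma length_take_ovd (hs : s.length = n) : (s.take (ovd n s t)).length = ovd n s t := by
  simpa [hs] using (ovd_spec (t := t) hs.le).1

lemma prefix_take_ovd_append (hs : s.length ≤ n) (ht : t <+: w) :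
    s <+: s.take (ovd n s t) ++ w := by
  conv_lhs => rw [← List.take_append_drop (ovd n s t) s, (ovd_spec hs).2]
  exact (List.prefix_append_right_inj _).2 ((List.take_prefix _ _).trans ht)

end Overlap

noncomputable def overlapMerge (n : ℕ) : List (List (Fin n)) → List (Fin n)
  | [] => []
  | [s] => s
  | s :: t :: rest => s.take (ovd n s t) ++ overlapMerge n (t :: rest)

section OverlapMerge

variable {n : ℕ}

lemma prefix_overlapMerge (s : List (Fin n)) (rest : List (List (Fin n)))
    (hlen : ∀ u ∈ s :: rest, u.length ≤ n) : s <+: overlapMerge n (s :: rest) := by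
  induction rest generalizing s with
  | nil => exact List.prefix_refl s
  | cons t rest ih =>
    exact prefix_take_ovd_append (hlen s (by simp))
      (ih t fun u hu => hlen u (List.mem_cons_of_mem s hu))

lemma infix_overlapMerge {ws : List (List (Fin n))} (hlen : ∀ u ∈ ws, u.length ≤ n)
    {s : List (Fin n)} (hs : s ∈ ws) : s <:+: overlapMerge n ws := by
  induction ws with
  | nil => simp at hs
  | cons u rest ih =>
    rcases List.mem_cons.1 hs with rfl | hs
    · exact (prefix_overlapMerge s rest hlen).isInfix
    · obtain _ | ⟨t, rest⟩ := rest
      · simp at hs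
      · exact (ih (fun v hv => hlen v (List.mem_cons_of_mem u hv)) hs).trans
          (List.suffix_append _ _).isInfix

lemma length_overlapMerge {ws : List (List (Fin n))} (hne : ws ≠ [])
    (hlen : ∀ u ∈ ws, u.length = n) :
    (overlapMerge n ws).length = n + ((ws.zip ws.tail).map fun q => ovd n q.1 q.2).sum := by
  obtain ⟨s, rest, rfl⟩ := List.exists_cons_of_ne_nil hne
  induction rest generalizing s with
  | nil => simpa [overlapMerge] using hlen s (by simp)
  | cons t rest ih =>
    rw [overlapMerge, List.length_append, length_take_ovd (hlen s (by simp)),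
      ih t (List.cons_ne_nil _ _) fun u hu => hlen u (List.mem_cons_of_mem s hu)]
    simp only [List.tail_cons, List.zip_cons_cons, List.map_cons, List.sum_cons]
    ring

end OverlapMerge

theorem stmt_13_general (n : ℕ) (p : List (Equiv.Perm (Fin n)))
    (hp : ∀ σ : Equiv.Perm (Fin n), p.count σ = 1) :
    ∃ w : List (Fin n), IsSuperperm n w ∧
      w.length = n + ((p.zip p.tail).map (fun q : Equiv.Perm (Fin n) × Equiv.Perm (Fin n) => ovd n (List.ofFn ⇑q.1) (List.ofFn ⇑q.2))).sum := by
  have hmem (σ : Equiv.Perm (Fin n)) : σ ∈ p := List.count_pos_iff.1 (by simp [hp])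
  have hlen : ∀ u ∈ p.map fun τ : Equiv.Perm (Fin n) => List.ofFn ⇑τ, u.length = n := by simp
  refine ⟨overlapMerge n (p.map fun τ : Equiv.Perm (Fin n) => List.ofFn ⇑τ),
    fun τ => infix_overlapMerge (fun u hu => (hlen u hu).le) (List.mem_map_of_mem (hmem τ)), ?_⟩
  rw [length_overlapMerge (by simpa using List.ne_nil_of_mem (hmem 1)) hlen, ← List.map_tail,
    List.zip_map, List.map_map]
  rfl

theorem stmt_13 (n : ℕ) (hn : 1 ≤ n) (p : List (Equiv.Perm (Fin n)))
    (hp : ∀ σ : Equiv.Perm (Fin n), p.count σ = 1) :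
    ∃ w : List (Fin n), IsSuperperm n w ∧
      w.length = n + ((p.zip p.tail).map (fun q : Equiv.Perm (Fin n) × Equiv.Perm (Fin n) => ovd n (List.ofFn ⇑q.1) (List.ofFn ⇑q.2))).sum :=
  stmt_13_general n p hp
end

section
/- Let n ≥ 1 and define, for permutations s, t of Fin n (viewed as words of length n), the overlap distance d(s,t) to be the least k with 0 ≤ k ≤ n such that the suffix of s of length n−k equals the prefix of t of length n−k. Then every superpermutation on n symbols has length at least n + m, where m is the minimum over all lists p₀, p₁, …, p_{n!−1} containing each of the n! permutations of Fin n exactly once of the sum ∑_{i=0}^{n!−2} d(p_i, p_{i+1}). -/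
theorem stmt_14 (n : ℕ) (hn : 1 ≤ n) (w : List (Fin n)) (hw : IsSuperperm n w) :
    n + sInf {m | ∃ p : List (Equiv.Perm (Fin n)),
        (∀ σ : Equiv.Perm (Fin n), p.count σ = 1) ∧
        m = ((p.zip p.tail).map (fun q : Equiv.Perm (Fin n) × Equiv.Perm (Fin n) => ovd n (List.ofFn ⇑q.1) (List.ofFn ⇑q.2))).sum} ≤ w.length := by
  classical
  set pos : Equiv.Perm (Fin n) → ℕ := fun σ => sInf {i | List.ofFn ⇑σ <+: w.drop i} with hpos
  have hne : ∀ σ : Equiv.Perm (Fin n), {i | List.ofFn ⇑σ <+: w.drop i}.Nonempty := by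
    intro σ
    obtain ⟨s, t, hst⟩ := hw σ
    refine ⟨s.length, ?_⟩
    simp only [Set.mem_setOf_eq, ← hst, List.append_assoc, List.drop_left]
    exact ⟨t, rfl⟩
  have hpre : ∀ σ : Equiv.Perm (Fin n), List.ofFn ⇑σ <+: w.drop (pos σ) := fun σ => Nat.sInf_mem (hne σ)
  have htake : ∀ σ : Equiv.Perm (Fin n), (w.drop (pos σ)).take n = List.ofFn ⇑σ := by
    intro σ
    have := (List.prefix_iff_eq_take).mp (hpre σ)
    rw [List.length_ofFn] at this
    exact this.symm
  have hposle : ∀ σ : Equiv.Perm (Fin n), pos σ + n ≤ w.length := by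
    intro σ
    have := (hpre σ).length_le
    rw [List.length_ofFn, List.length_drop] at this
    omega
  have hinj : Function.Injective pos := by
    intro σ τ h
    have : List.ofFn ⇑σ = List.ofFn ⇑τ := by rw [← htake σ, ← htake τ, h]
    exact Equiv.coe_fn_injective (List.ofFn_inj.mp this)
  -- key: ovd bound
  have hovd : ∀ σ τ : Equiv.Perm (Fin n), pos σ < pos τ →
      ovd n (List.ofFn ⇑σ) (List.ofFn ⇑τ) + pos σ ≤ pos τ := by
    intro σ τ hlt
    set k := pos τ - pos σ with hk
    have hk1 : 1 ≤ k := by omega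
    have : ovd n (List.ofFn ⇑σ) (List.ofFn ⇑τ) ≤ min k n := by
      apply Nat.sInf_le
      constructor
      · exact min_le_right _ _
      · rcases le_or_gt n k with h | h
        · simp [min_eq_right h]
        · rw [min_eq_left h.le, ← htake σ, ← htake τ, List.drop_take, List.take_take,
            List.drop_drop, min_eq_left (Nat.sub_le _ _)]
          congr 2
          omega
    have : ovd n (List.ofFn ⇑σ) (List.ofFn ⇑τ) ≤ k := this.trans (min_le_left _ _)
    omega
  -- chain lemma
  have chain : ∀ (l : List (Equiv.Perm (Fin n))) (a : Equiv.Perm (Fin n)),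
      List.Pairwise (fun x y => pos x < pos y) (a :: l) →
      (((a :: l).zip l).map (fun q : Equiv.Perm (Fin n) × Equiv.Perm (Fin n) =>
        ovd n (List.ofFn ⇑q.1) (List.ofFn ⇑q.2))).sum + pos a
        ≤ pos ((a :: l).getLast (by simp)) := by
    intro l
    induction l with
    | nil => intro a _; simp
    | cons b l ih =>
      intro a hp
      have hab : pos a < pos b := (List.pairwise_cons.mp hp).1 b (by simp)
      have hrest := ih b (List.pairwise_cons.mp hp).2
      have h1 := hovd a b hab
      rw [List.getLast_cons (by simp : (b :: l) ≠ [])]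
      simp only [List.zip_cons_cons, List.map_cons, List.sum_cons]
      omega
  -- build the list
  set r : Equiv.Perm (Fin n) → Equiv.Perm (Fin n) → Prop := fun x y => pos x ≤ pos y with hr
  haveI : DecidableRel r := fun _ _ => Nat.decLe _ _
  haveI : IsTotal (Equiv.Perm (Fin n)) r := ⟨fun x y => Nat.le_total (pos x) (pos y)⟩
  haveI : IsTrans (Equiv.Perm (Fin n)) r := ⟨fun _ _ _ => Nat.le_trans⟩
  set p := List.insertionSort r (Finset.univ : Finset (Equiv.Perm (Fin n))).toList with hpdef
  have hperm : p.Perm (Finset.univ : Finset (Equiv.Perm (Fin n))).toList :=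
    List.perm_insertionSort r _
  have hcount : ∀ σ : Equiv.Perm (Fin n), p.count σ = 1 := by
    intro σ
    rw [hperm.count_eq]
    exact List.count_eq_one_of_mem (Finset.nodup_toList _) (Finset.mem_toList.mpr (Finset.mem_univ σ))
  have hnodup : p.Nodup := hperm.nodup_iff.mpr (Finset.nodup_toList _)
  have hsorted : List.Pairwise (fun x y => pos x < pos y) p := by
    have hs : List.Pairwise r p := List.pairwise_insertionSort r _
    have := hs.and hnodup
    exact this.imp (fun {x y} h => lt_of_le_of_ne h.1 (fun he => h.2 (hinj he)))
  have hpne : p ≠ [] := by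
    intro h
    have := hcount 1
    rw [h] at this
    simp at this
  clear_value p
  obtain ⟨a, l, rfl⟩ := List.exists_cons_of_ne_nil hpne
  have hch := chain l a hsorted
  have hlast := hposle ((a :: l).getLast (by simp))
  have hsInf : sInf {m | ∃ p : List (Equiv.Perm (Fin n)),
        (∀ σ : Equiv.Perm (Fin n), p.count σ = 1) ∧
        m = ((p.zip p.tail).map (fun q : Equiv.Perm (Fin n) × Equiv.Perm (Fin n) => ovd n (List.ofFn ⇑q.1) (List.ofFn ⇑q.2))).sum}
      ≤ (((a :: l).zip l).map (fun q : Equiv.Perm (Fin n) × Equiv.Perm (Fin n) =>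
        ovd n (List.ofFn ⇑q.1) (List.ofFn ⇑q.2))).sum :=
    Nat.sInf_le ⟨a :: l, hcount, rfl⟩
  omega
end

section
/- Let n ≥ 1. The minimum length of a superpermutation on n symbols equals n + m, where m is the minimum over all lists p₀, p₁, …, p_{n!−1} containing each of the n! permutations of Fin n exactly once of the sum ∑_{i=0}^{n!−2} d(p_i, p_{i+1}), and d is the overlap distance. -/
theorem List.IsInfix.exists_take_drop_eq {α : Type*} {l w : List α} (h : l <:+: w) :
    ∃ k, k + l.length ≤ w.length ∧ (w.drop k).take l.length = l := by
  obtain ⟨s, t, rfl⟩ := h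
  refine ⟨s.length, by simp, ?_⟩
  rw [List.append_assoc, List.drop_left, List.take_left' rfl]

theorem List.exists_count_eq_one_pairwise_le {α : Type*} [Fintype α] [DecidableEq α]
    (f : α → ℕ) : ∃ l : List α, (∀ a, l.count a = 1) ∧ l.Pairwise (fun a b => f a ≤ f b) := by
  let l := (Finset.univ : Finset α).toList.mergeSort (fun a b => decide (f a ≤ f b))
  refine ⟨l, fun a => ?_, ?_⟩
  · rw [(List.mergeSort_perm _ _).count_eq]
    exact List.count_eq_one_of_mem (Finset.nodup_toList _) (by simp)
  · simpa using List.pairwise_mergeSort (le := fun a b => decide (f a ≤ f b))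
      (fun _ _ _ hab hbc => by simp only [decide_eq_true_eq] at *; omega)
      (fun a b => by simpa using le_total (f a) (f b)) _

section Overlap

variable {n : ℕ}

theorem ovd_le_of_drop_eq_take {s t : List (Fin n)} {k : ℕ} (hk : k ≤ n)
    (h : s.drop k = t.take (n - k)) : ovd n s t ≤ k :=
  Nat.sInf_le ⟨hk, h⟩

theorem ovd_le {s t : List (Fin n)} (hs : s.length ≤ n) : ovd n s t ≤ n :=
  ovd_le_of_drop_eq_take le_rfl (by simp [List.drop_eq_nil_iff.mpr hs])

theorem drop_ovd_eq_take {s t : List (Fin n)} (hs : s.length ≤ n) :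
    s.drop (ovd n s t) = t.take (n - ovd n s t) :=
  (Nat.sInf_mem (s := {k | k ≤ n ∧ s.drop k = t.take (n - k)})
    ⟨n, le_rfl, by simp [List.drop_eq_nil_iff.mpr hs]⟩).2

/-- Two length-`n` windows of a word starting at positions `i ≤ j` overlap in `n - (j - i)`
letters. -/
theorem ovd_take_drop_le_sub (w : List (Fin n)) {i j : ℕ} (hij : i ≤ j) :
    ovd n ((w.drop i).take n) ((w.drop j).take n) ≤ j - i := by
  by_cases hji : j - i ≤ n
  · refine ovd_le_of_drop_eq_take hji ?_
    rw [List.drop_take, List.drop_drop, List.take_take, Nat.add_sub_cancel' hij,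
      Nat.min_eq_left (Nat.sub_le n _)]
  · exact (ovd_le (by simp)).trans (by omega)

end Overlap

section Path

variable {n : ℕ}

noncomputable def pathCost (n : ℕ) (p : List (Equiv.Perm (Fin n))) : ℕ :=
  ((p.zip p.tail).map (fun q : Equiv.Perm (Fin n) × Equiv.Perm (Fin n) =>
    ovd n (List.ofFn ⇑q.1) (List.ofFn ⇑q.2))).sum

@[simp]
theorem pathCost_singleton (a : Equiv.Perm (Fin n)) : pathCost n [a] = 0 := rfl

theorem pathCost_cons_cons (a b : Equiv.Perm (Fin n)) (p : List (Equiv.Perm (Fin n))) :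
    pathCost n (a :: b :: p) = ovd n (List.ofFn ⇑a) (List.ofFn ⇑b) + pathCost n (b :: p) := by
  simp [pathCost]

/-- The word spelling out `a :: p`, each permutation glued to the next along their maximal
overlap. -/
noncomputable def mergeWord (n : ℕ) : Equiv.Perm (Fin n) → List (Equiv.Perm (Fin n)) → List (Fin n)
  | a, [] => List.ofFn ⇑a
  | a, b :: p => List.ofFn ⇑a ++ (mergeWord n b p).drop (n - ovd n (List.ofFn ⇑a) (List.ofFn ⇑b))

theorem ofFn_prefix_mergeWord (a : Equiv.Perm (Fin n)) (p : List (Equiv.Perm (Fin n))) :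
    List.ofFn ⇑a <+: mergeWord n a p := by
  cases p with
  | nil => exact List.prefix_refl _
  | cons b p => exact ⟨_, rfl⟩

theorem mergeWord_cons (a b : Equiv.Perm (Fin n)) (p : List (Equiv.Perm (Fin n))) :
    mergeWord n a (b :: p) =
      (List.ofFn ⇑a).take (ovd n (List.ofFn ⇑a) (List.ofFn ⇑b)) ++ mergeWord n b p := by
  have hovl := drop_ovd_eq_take (t := List.ofFn ⇑b) (List.length_ofFn (f := ⇑a)).le
  obtain ⟨u, hu⟩ := ofFn_prefix_mergeWord b p
  set k := ovd n (List.ofFn ⇑a) (List.ofFn ⇑b)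
  change List.ofFn ⇑a ++ (mergeWord n b p).drop (n - k) = _
  rw [← hu, List.drop_append_of_le_length (by simp)]
  conv_lhs => rw [← List.take_append_drop k (List.ofFn ⇑a), hovl]
  rw [List.append_assoc, ← List.append_assoc (List.take (n - k) _), List.take_append_drop]

theorem length_mergeWord (a : Equiv.Perm (Fin n)) (p : List (Equiv.Perm (Fin n))) :
    (mergeWord n a p).length = n + pathCost n (a :: p) := by
  induction p generalizing a with
  | nil => simp [mergeWord]
  | cons b p ih =>
    have hle := ovd_le (t := List.ofFn ⇑b) (List.length_ofFn (f := ⇑a)).le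
    rw [mergeWord_cons, pathCost_cons_cons, List.length_append, List.length_take, ih,
      List.length_ofFn]
    omega

theorem ofFn_infix_mergeWord {σ a : Equiv.Perm (Fin n)} {p : List (Equiv.Perm (Fin n))}
    (hσ : σ ∈ a :: p) : List.ofFn ⇑σ <:+: mergeWord n a p := by
  induction p generalizing a with
  | nil =>
    rw [List.mem_singleton.mp hσ]
    exact List.infix_refl _
  | cons b p ih =>
    rcases List.mem_cons.mp hσ with rfl | hσ
    · exact (ofFn_prefix_mergeWord σ _).isInfix
    · rw [mergeWord_cons]
      exact (ih hσ).trans (List.suffix_append _ _).isInfix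

theorem pathCost_add_le_of_pairwise (o : Equiv.Perm (Fin n) → ℕ) (L : ℕ)
    (hovd : ∀ a b, o a ≤ o b → ovd n (List.ofFn ⇑a) (List.ofFn ⇑b) ≤ o b - o a)
    (hL : ∀ a, o a + n ≤ L) (a : Equiv.Perm (Fin n)) (p : List (Equiv.Perm (Fin n)))
    (hp : (a :: p).Pairwise (fun a b => o a ≤ o b)) : pathCost n (a :: p) + o a + n ≤ L := by
  induction p generalizing a with
  | nil => simpa using hL a
  | cons b p ih =>
    have hab : o a ≤ o b := List.rel_of_pairwise_cons hp (List.mem_cons_self ..)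
    have hstep := hovd a b hab
    have hrest := ih b hp.of_cons
    rw [pathCost_cons_cons]
    omega

end Path

section Superperm

variable {n : ℕ}

theorem exists_isSuperperm_length_eq {p : List (Equiv.Perm (Fin n))}
    (hp : ∀ σ, p.count σ = 1) : ∃ w, IsSuperperm n w ∧ w.length = n + pathCost n p := by
  have hmem : ∀ σ, σ ∈ p := fun σ => List.count_pos_iff.mp (by rw [hp σ]; exact one_pos)
  obtain ⟨a, q, rfl⟩ := List.exists_cons_of_ne_nil (List.ne_nil_of_mem (hmem 1))
  exact ⟨mergeWord n a q, fun σ => ofFn_infix_mergeWord (hmem σ), length_mergeWord a q⟩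

theorem IsSuperperm.exists_pathCost_le {w : List (Fin n)} (hw : IsSuperperm n w) :
    ∃ p : List (Equiv.Perm (Fin n)), (∀ σ, p.count σ = 1) ∧ n + pathCost n p ≤ w.length := by
  have hocc (σ : Equiv.Perm (Fin n)) := (hw σ).exists_take_drop_eq
  simp only [List.length_ofFn] at hocc
  choose o hoL hoσ using hocc
  have hovd (a b) (hab : o a ≤ o b) : ovd n (List.ofFn ⇑a) (List.ofFn ⇑b) ≤ o b - o a := by
    rw [← hoσ a, ← hoσ b]
    exact ovd_take_drop_le_sub w hab
  obtain ⟨p, hcount, hsorted⟩ := List.exists_count_eq_one_pairwise_le o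
  obtain ⟨a, q, rfl⟩ := List.exists_cons_of_ne_nil <|
    List.ne_nil_of_mem (List.count_pos_iff.mp (by rw [hcount 1]; exact one_pos))
  have hcost := pathCost_add_le_of_pairwise o w.length hovd hoL a q hsorted
  exact ⟨a :: q, hcount, by omega⟩

end Superperm

theorem stmt_15_general (n : ℕ) :
    sInf {k | ∃ w : List (Fin n), IsSuperperm n w ∧ w.length = k} =
      n + sInf {m | ∃ p : List (Equiv.Perm (Fin n)),
        (∀ σ : Equiv.Perm (Fin n), p.count σ = 1) ∧
        m = ((p.zip p.tail).map (fun q : Equiv.Perm (Fin n) × Equiv.Perm (Fin n) => ovd n (List.ofFn ⇑q.1) (List.ofFn ⇑q.2))).sum} := by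
  let T : Set ℕ := {m | ∃ p : List (Equiv.Perm (Fin n)), (∀ σ, p.count σ = 1) ∧ m = pathCost n p}
  change _ = n + sInf T
  have hT : T.Nonempty := by
    obtain ⟨p, hp, -⟩ := List.exists_count_eq_one_pairwise_le (fun _ : Equiv.Perm (Fin n) => 0)
    exact ⟨_, p, hp, rfl⟩
  obtain ⟨p, hp, hpT⟩ := Nat.sInf_mem hT
  obtain ⟨w, hw, hwlen⟩ := exists_isSuperperm_length_eq hp
  refine le_antisymm (Nat.sInf_le ⟨w, hw, by rw [hwlen, hpT]⟩) (le_csInf ⟨w.length, w, hw, rfl⟩ ?_)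
  rintro _ ⟨w', hw', rfl⟩
  obtain ⟨p', hp', hlen⟩ := hw'.exists_pathCost_le
  exact (Nat.add_le_add_left (Nat.sInf_le (s := T) ⟨p', hp', rfl⟩) n).trans hlen

theorem stmt_15 (n : ℕ) (hn : 1 ≤ n) :
    sInf {k | ∃ w : List (Fin n), IsSuperperm n w ∧ w.length = k} =
      n + sInf {m | ∃ p : List (Equiv.Perm (Fin n)),
        (∀ σ : Equiv.Perm (Fin n), p.count σ = 1) ∧
        m = ((p.zip p.tail).map (fun q : Equiv.Perm (Fin n) × Equiv.Perm (Fin n) => ovd n (List.ofFn ⇑q.1) (List.ofFn ⇑q.2))).sum} :=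
  stmt_15_general n
end

section
/- The superpermutation on n symbols of length ∑_{i=1}^{n} i! produced by the recursive construction is a palindrome, for every n ≥ 1. -/
/-- A superpermutation on `n` symbols, encoded over `ℕ` (symbol `i+1` of the
paper corresponds to `i : ℕ`, `i < n`): the word contains every permutation
`σ` of `Fin n` (as the word `σ 0, σ 1, …, σ (n-1)`) as a contiguous substring. -/
def IsSuperpermNat (n : ℕ) (w : List ℕ) : Prop :=
  ∀ σ : Equiv.Perm (Fin n), List.ofFn (fun i => (σ i : ℕ)) <:+: w

/-- Remove duplicates from a list, keeping the *first* occurrence of each element. -/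
def dedupFirst : List (List ℕ) → List (List ℕ)
  | [] => []
  | x :: xs => x :: (dedupFirst xs).filter (fun y => decide (y ≠ x))

/-- The permutations of the symbols `0, …, m-1`, listed in order of their first
appearance as a contiguous substring of the word `w`. -/
def firstAppear (m : ℕ) (w : List ℕ) : List (List ℕ) :=
  dedupFirst (((List.range w.length).map (fun i => (w.drop i).take m)).filter
    (fun s => decide (s.Perm (List.range m))))

/-- The maximal overlap: the greatest `k` such that the prefix of `b` of length
`k` is a suffix of `a`. -/
def overlap (a b : List ℕ) : ℕ :=
  Nat.findGreatest (fun k => b.take k <:+ a) (min a.length b.length)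

/-- Concatenate a chain of words, eliminating the maximal overlap between
adjacent words. -/
def glueChain : List (List ℕ) → List ℕ
  | [] => []
  | [p] => p
  | p :: q :: rest => p ++ (glueChain (q :: rest)).drop (overlap p q)

/-- One step of the recursive construction: given a superpermutation `w` on the
symbols `0, …, m-1`, order the permutations of `m` symbols by first appearance
in `w`; replace each such permutation `s` by the `m + 1` leftward cyclic shifts
of the word `s · m` (from `s · m` to `m · s`); and concatenate all of these,
eliminating overlap between adjacent permutations. -/
def buildStep (m : ℕ) (w : List ℕ) : List ℕ :=
  glueChain (((firstAppear m w).map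
    (fun s => (List.range (m + 1)).map (fun j => (s ++ [m]).rotate j))).flatten)

/-- The recursive construction of superpermutations: start with the single-symbol
word at `n = 1` and iterate `buildStep`. -/
def superword : ℕ → List ℕ
  | 0 => []
  | 1 => [0]
  | n + 2 => buildStep (n + 1) (superword (n + 1))

/-!
At level `m` the word is the overlap-gluing of a list `S` of all `m!` permutations of
`0, …, m-1` in which consecutive permutations overlap in between `1` and `m - 1` letters and
gluing two neighbours creates no new permutation window. For such a chain the permutations,
read off in order of first appearance, are exactly `S`, so the next word glues the rotation
blocks of the elements of `S`; this list is again such a chain, because consecutive rotations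
overlap in `m` letters and the junction `m · s | t · m` between two blocks overlaps exactly as
`s | t` did. Counting overlaps, each level adds `m! · (m + 1)` letters.
Gluing commutes with reversing the list together with each word, and this mirror image of the
block of `s` is the block of the reversed `s`; hence the chain is its own mirror image at every
level, and the word is a palindrome.
-/

open List

theorem Nat.findGreatest_congr {P Q : ℕ → Prop} [DecidablePred P] [DecidablePred Q] {n : ℕ}
    (h : ∀ k ≤ n, (P k ↔ Q k)) : Nat.findGreatest P n = Nat.findGreatest Q n := by
  obtain ⟨hle, hQ, hmax⟩ := Nat.findGreatest_eq_iff.mp (rfl : Nat.findGreatest Q n = _)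
  exact Nat.findGreatest_eq_iff.mpr
    ⟨hle, fun h0 => (h _ hle).mpr (hQ h0), fun k hk hkn hP => hmax hk hkn ((h k hkn).mp hP)⟩

section Overlap

theorem overlap_le_left (a b : List ℕ) : overlap a b ≤ a.length :=
  (Nat.findGreatest_le _).trans (min_le_left _ _)

theorem overlap_le_right (a b : List ℕ) : overlap a b ≤ b.length :=
  (Nat.findGreatest_le _).trans (min_le_right _ _)

theorem take_overlap_suffix (a b : List ℕ) : b.take (overlap a b) <:+ a :=
  Nat.findGreatest_spec (P := fun k => b.take k <:+ a) (Nat.zero_le _) (by simp)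

theorem take_suffix_iff_eq_drop {a b : List ℕ} {k : ℕ} (hkb : k ≤ b.length) :
    b.take k <:+ a ↔ b.take k = a.drop (a.length - k) := by
  rw [suffix_iff_eq_drop, length_take, min_eq_left hkb]

theorem overlap_reverse (a b : List ℕ) : overlap b.reverse a.reverse = overlap a b := by
  unfold overlap
  rw [length_reverse, length_reverse, min_comm]
  refine Nat.findGreatest_congr fun k hk => ?_
  have hka : k ≤ a.length := hk.trans (min_le_left _ _)
  have hkb : k ≤ b.length := hk.trans (min_le_right _ _)
  rw [take_suffix_iff_eq_drop (by simpa using hka), take_suffix_iff_eq_drop hkb, take_reverse,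
    length_reverse, drop_reverse, Nat.sub_sub_self hkb, reverse_inj, eq_comm]

end Overlap

section Glue

theorem glueChain_cons_cons (a b : List ℕ) (r : List (List ℕ)) :
    glueChain (a :: b :: r) = a ++ (glueChain (b :: r)).drop (overlap a b) :=
  rfl

theorem prefix_glueChain (b : List ℕ) (r : List (List ℕ)) : b <+: glueChain (b :: r) := by
  cases r with
  | nil => exact prefix_refl b
  | cons c r => exact prefix_append _ _

theorem append_drop_overlap {a b x : List ℕ} (hx : b <+: x) :
    a ++ x.drop (overlap a b) = a.take (a.length - overlap a b) ++ x := by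
  have ho := overlap_le_right a b
  obtain ⟨u, hu⟩ := take_overlap_suffix a b
  obtain ⟨y, rfl⟩ := hx
  generalize overlap a b = o at ho hu ⊢
  subst hu
  have hlen : (take o b).length = o := by simp [ho]
  rw [length_append, hlen, Nat.add_sub_cancel, take_left' rfl, drop_append_of_le_length ho,
    append_assoc, ← append_assoc (take o b), take_append_drop]

theorem glueChain_cons_cons_eq_take_append (a b : List ℕ) (r : List (List ℕ)) :
    glueChain (a :: b :: r) = a.take (a.length - overlap a b) ++ glueChain (b :: r) :=
  append_drop_overlap (prefix_glueChain b r)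

theorem infix_glueChain_of_mem {c : List ℕ} {C : List (List ℕ)} (hc : c ∈ C) :
    c <:+: glueChain C := by
  induction C with
  | nil => simp at hc
  | cons a r ih =>
    rcases mem_cons.mp hc with rfl | hc
    · exact (prefix_glueChain c r).isInfix
    · obtain ⟨b, r, rfl⟩ := exists_cons_of_ne_nil (ne_nil_of_mem hc)
      rw [glueChain_cons_cons_eq_take_append]
      exact (ih hc).trans (suffix_append _ _).isInfix

theorem glueChain_concat {D : List (List ℕ)} (hD : D ≠ []) (x : List ℕ) :
    glueChain (D ++ [x]) = glueChain D ++ x.drop (overlap (D.getLast hD) x) := by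
  induction D with
  | nil => exact absurd rfl hD
  | cons p D ih =>
    cases D with
    | nil => rfl
    | cons q r =>
      have hqr : q :: r ≠ [] := cons_ne_nil q r
      calc glueChain (p :: q :: r ++ [x])
          = p.take (p.length - overlap p q) ++ glueChain (q :: r ++ [x]) :=
            glueChain_cons_cons_eq_take_append p q (r ++ [x])
        _ = _ := by
          rw [ih hqr, glueChain_cons_cons_eq_take_append, getLast_cons hqr, append_assoc]

def mirror (C : List (List ℕ)) : List (List ℕ) :=
  (C.map reverse).reverse

theorem reverse_glueChain (C : List (List ℕ)) : (glueChain C).reverse = glueChain (mirror C) := by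
  induction C with
  | nil => rfl
  | cons a r ih =>
    cases r with
    | nil => rfl
    | cons b r =>
      have hne : mirror (b :: r) ≠ [] := by simp [mirror]
      have hlast : (mirror (b :: r)).getLast hne = b.reverse := by simp [mirror]
      rw [glueChain_cons_cons_eq_take_append, reverse_append, ih,
        show mirror (a :: b :: r) = mirror (b :: r) ++ [a.reverse] by simp [mirror],
        glueChain_concat hne, hlast, overlap_reverse, reverse_take,
        Nat.sub_sub_self (overlap_le_left a b)]

def overlapSum : List (List ℕ) → ℕ
  | [] => 0
  | [_] => 0
  | a :: b :: r => overlap a b + overlapSum (b :: r)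

theorem length_glueChain_add_overlapSum (C : List (List ℕ)) :
    (glueChain C).length + overlapSum C = (C.map length).sum := by
  induction C with
  | nil => rfl
  | cons a r ih =>
    cases r with
    | nil => simp [glueChain, overlapSum]
    | cons b r =>
      have ho := overlap_le_left a b
      simp only [glueChain_cons_cons_eq_take_append, overlapSum, map_cons, sum_cons,
        length_append, length_take] at ih ⊢
      omega

theorem overlapSum_append {B M : List (List ℕ)} (hB : B ≠ []) (hM : M ≠ []) :
    overlapSum (B ++ M) = overlapSum B + overlap (B.getLast hB) (M.head hM) + overlapSum M := by
  induction B with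
  | nil => exact absurd rfl hB
  | cons a B ih =>
    cases B with
    | nil =>
      obtain ⟨c, M, rfl⟩ := exists_cons_of_ne_nil hM
      simp [overlapSum]
    | cons b B =>
      have hbB : b :: B ≠ [] := cons_ne_nil b B
      rw [cons_append, cons_append, overlapSum, ← cons_append, ih hbB, overlapSum,
        getLast_cons hbB]
      ring

theorem overlapSum_of_isChain_overlap_eq {c : ℕ} {C : List (List ℕ)}
    (h : C.IsChain (fun a b => overlap a b = c)) : overlapSum C = (C.length - 1) * c := by
  induction C with
  | nil => simp [overlapSum]
  | cons a r ih =>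
    cases r with
    | nil => simp [overlapSum]
    | cons b r =>
      obtain ⟨hab, h⟩ := isChain_cons_cons.mp h
      rw [overlapSum, ih h, hab]
      simp only [length_cons, Nat.add_sub_cancel]
      ring

end Glue

section Windows

theorem length_of_perm_range {m : ℕ} {s : List ℕ} (hs : s.Perm (range m)) : s.length = m := by
  simpa using hs.length_eq

theorem notMem_of_perm_range {m : ℕ} {s : List ℕ} (hs : s.Perm (range m)) : m ∉ s := by
  simp [hs.mem_iff]

def permWindows (L : ℕ) (w : List ℕ) : List (List ℕ) :=
  ((range w.length).map fun i => (w.drop i).take L).filter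
    fun s => decide (s.Perm (range L))

theorem firstAppear_eq_dedupFirst (L : ℕ) (w : List ℕ) :
    firstAppear L w = dedupFirst (permWindows L w) :=
  rfl

theorem dedupFirst_eq_self {S : List (List ℕ)} (h : S.Nodup) : dedupFirst S = S := by
  induction S with
  | nil => rfl
  | cons x S ih =>
    obtain ⟨hx, hS⟩ := nodup_cons.mp h
    rw [dedupFirst, ih hS,
      filter_eq_self.mpr fun y hy => decide_eq_true (ne_of_mem_of_not_mem hy hx)]

theorem filter_map_range_eq_singleton {α : Type*} {f : ℕ → α} {p : α → Bool} {d : ℕ}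
    (hd : 0 < d) (h0 : p (f 0)) (hpos : ∀ i, 0 < i → i < d → p (f i) = false) :
    ((range d).map f).filter p = [f 0] := by
  obtain ⟨d, rfl⟩ := Nat.exists_eq_add_of_lt hd
  rw [zero_add, range_succ_eq_map, map_cons, filter_cons_of_pos h0, map_map,
    filter_eq_nil_iff.mpr]
  simp only [mem_map, mem_range, Function.comp_apply, forall_exists_index, and_imp]
  rintro _ i hi rfl
  simp [hpos (i + 1) i.succ_pos (by omega)]

theorem map_range_drop_take_append (L : ℕ) (x y : List ℕ) :
    (range (x ++ y).length).map (fun i => ((x ++ y).drop i).take L) =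
      (range x.length).map (fun i => ((x ++ y).drop i).take L) ++
        (range y.length).map fun i => (y.drop i).take L := by
  rw [length_append, range_add, map_append, map_map]
  congr 2
  funext i
  rw [Function.comp_apply, drop_length_add_append]

theorem permWindows_append_of_prefix {L : ℕ} {x y a : List ℕ} (hx : x ≠ [])
    (ha : a.Perm (range L)) (hpre : a <+: x ++ y)
    (hgap : ∀ t, 0 < t → t < x.length → ¬ (((x ++ y).drop t).take L).Perm (range L)) :
    permWindows L (x ++ y) = a :: permWindows L y := by
  have hwin0 : ((x ++ y).drop 0).take L = a := by
    rw [drop_zero, prefix_iff_eq_take.mp hpre, ha.length_eq, length_range]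
  unfold permWindows
  rw [map_range_drop_take_append, filter_append,
    filter_map_range_eq_singleton (f := fun i => ((x ++ y).drop i).take L)
      (p := fun s : List ℕ => decide (s.Perm (range L))) (length_pos_iff.mpr hx)
      (by rw [hwin0]; exact decide_eq_true ha) fun t ht0 htx => decide_eq_false (hgap t ht0 htx),
    hwin0, singleton_append]

/-- Gluing `a` and `b` creates no permutation window besides `a` and `b` themselves. -/
structure CleanJunction (L : ℕ) (a b : List ℕ) : Prop where
  overlap_pos : 0 < overlap a b
  overlap_lt : overlap a b < L
  not_perm_window : ∀ t, 0 < t → t < a.length - overlap a b →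
    ¬ (((glueChain [a, b]).drop t).take L).Perm (range L)

theorem permWindows_glueChain {L : ℕ} (hL : 0 < L) {C : List (List ℕ)} (hC : C ≠ [])
    (hperm : ∀ s ∈ C, s.Perm (range L)) (hchain : C.IsChain (CleanJunction L)) :
    permWindows L (glueChain C) = C := by
  induction C with
  | nil => exact absurd rfl hC
  | cons a r ih =>
    have ha := hperm a mem_cons_self
    have haL := length_of_perm_range ha
    cases r with
    | nil =>
      rw [show glueChain [a] = a ++ [] from (append_nil a).symm]
      refine permWindows_append_of_prefix (ne_nil_of_length_pos (haL ▸ hL)) ha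
        (prefix_append a []) fun t ht0 _ hp => ?_
      have := hp.length_eq
      simp only [append_nil, length_take, length_drop, length_range] at this
      omega
    | cons b r =>
      obtain ⟨hab, hchain⟩ := isChain_cons_cons.mp hchain
      have hb := length_of_perm_range (hperm b (by simp))
      have ho := hab.overlap_lt
      obtain ⟨y, hy⟩ := prefix_glueChain b r
      have hpair : glueChain [a, b] = a.take (a.length - overlap a b) ++ b :=
        glueChain_cons_cons_eq_take_append a b []
      have hpre : a <+: a.take (a.length - overlap a b) ++ glueChain (b :: r) := by
        rw [← glueChain_cons_cons_eq_take_append]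
        exact prefix_append _ _
      have hgap : ∀ t, 0 < t → t < (a.take (a.length - overlap a b)).length →
          ¬ (((a.take (a.length - overlap a b) ++ glueChain (b :: r)).drop t).take L).Perm
            (range L) := by
        intro t ht0 htd
        rw [length_take, min_eq_left (Nat.sub_le _ _)] at htd
        rw [← hy, ← append_assoc, ← hpair, drop_append_of_le_length
          (by simp [hpair]; omega), take_append_of_le_length (by simp [hpair]; omega)]
        exact hab.not_perm_window t ht0 htd
      rw [glueChain_cons_cons_eq_take_append, permWindows_append_of_prefix
        (ne_nil_of_length_pos (by rw [length_take]; omega)) ha hpre hgap,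
        ih (cons_ne_nil b r) (fun s hs => hperm s (mem_cons_of_mem a hs)) hchain]

theorem firstAppear_glueChain {L : ℕ} (hL : 0 < L) {C : List (List ℕ)} (hC : C ≠ [])
    (hperm : ∀ s ∈ C, s.Perm (range L)) (hchain : C.IsChain (CleanJunction L))
    (hnodup : C.Nodup) : firstAppear L (glueChain C) = C := by
  rw [firstAppear_eq_dedupFirst, permWindows_glueChain hL hC hperm hchain,
    dedupFirst_eq_self hnodup]

end Windows

section RotationBlock

theorem rotate_append_singleton {α : Type*} (s : List α) (x : α) {j : ℕ}
    (hj : j ≤ s.length) :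
    (s ++ [x]).rotate j = s.drop j ++ x :: s.take j := by
  rw [rotate_eq_drop_append_take (by simp; omega), drop_append_of_le_length hj,
    take_append_of_le_length hj, append_assoc, singleton_append]

theorem rotate_append_singleton_inj {α : Type*} {x : α} {s t : List α} {j k : ℕ}
    (hs : x ∉ s) (ht : x ∉ t) (hst : s.length = t.length) (hj : j ≤ s.length)
    (hk : k ≤ t.length) (h : (s ++ [x]).rotate j = (t ++ [x]).rotate k) : j = k ∧ s = t := by
  classical
  rw [rotate_append_singleton s x hj, rotate_append_singleton t x hk] at h
  have hidx := congrArg (idxOf x) h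
  rw [idxOf_append_of_notMem fun hm => hs (mem_of_mem_drop hm),
    idxOf_append_of_notMem fun hm => ht (mem_of_mem_drop hm), idxOf_cons_self,
    idxOf_cons_self] at hidx
  simp only [length_drop, add_zero] at hidx
  obtain rfl : j = k := by omega
  obtain ⟨hdrop, htake⟩ := append_inj h (by simp [hst])
  rw [← take_append_drop j s, ← take_append_drop j t, hdrop, (cons_inj_right x).mp htake]
  exact ⟨rfl, rfl⟩

def rotationBlock (m : ℕ) (s : List ℕ) : List (List ℕ) :=
  (range (m + 1)).map fun j => (s ++ [m]).rotate j

theorem buildStep_eq (m : ℕ) (w : List ℕ) :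
    buildStep m w = glueChain ((firstAppear m w).flatMap (rotationBlock m)) :=
  rfl

variable {m : ℕ} {s t : List ℕ}

theorem append_singleton_perm_range_succ (hs : s.Perm (range m)) :
    (s ++ [m]).Perm (range (m + 1)) := by
  rw [range_succ]
  exact hs.append_right [m]

theorem perm_range_succ_of_mem_rotationBlock (hs : s.Perm (range m)) {u : List ℕ}
    (hu : u ∈ rotationBlock m s) : u.Perm (range (m + 1)) := by
  obtain ⟨j, -, rfl⟩ := mem_map.mp hu
  exact (rotate_perm _ _).trans (append_singleton_perm_range_succ hs)

theorem exists_mem_rotationBlock {u : List ℕ} (hu : u.Perm (range (m + 1))) :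
    ∃ s, s.Perm (range m) ∧ u ∈ rotationBlock m s := by
  -- cut `u = p · m · q` at the letter `m`; then `s = q · p`
  obtain ⟨p, q, rfl⟩ := append_of_mem (hu.mem_iff.mpr (mem_range.mpr m.lt_succ_self))
  have hlen : p.length + q.length = m := by
    have := hu.length_eq
    simp only [length_append, length_cons, length_range] at this
    omega
  refine ⟨q ++ p, ?_, mem_map.mpr ⟨q.length, mem_range.mpr (by omega), ?_⟩⟩
  · refine Perm.cons_inv (a := m) ?_
    calc m :: (q ++ p) ~ m :: (p ++ q) := perm_append_comm.cons m
      _ ~ p ++ m :: q := perm_middle.symm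
      _ ~ range (m + 1) := hu
      _ ~ m :: range m := by rw [range_succ]; exact perm_append_singleton _ _
  · rw [append_assoc, rotate_append_length_eq, append_assoc, singleton_append]

theorem rotate_append_singleton_inj_of_perm {j k : ℕ} (hs : s.Perm (range m))
    (ht : t.Perm (range m)) (hj : j ≤ m) (hk : k ≤ m)
    (h : (s ++ [m]).rotate j = (t ++ [m]).rotate k) : j = k ∧ s = t :=
  rotate_append_singleton_inj (notMem_of_perm_range hs) (notMem_of_perm_range ht)
    (by rw [length_of_perm_range hs, length_of_perm_range ht])
    (by rwa [length_of_perm_range hs]) (by rwa [length_of_perm_range ht]) h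

theorem nodup_rotationBlock (hs : s.Perm (range m)) : (rotationBlock m s).Nodup :=
  nodup_range.map_on fun _ hj _ hk h =>
    (rotate_append_singleton_inj_of_perm hs hs (Nat.lt_succ_iff.mp (mem_range.mp hj))
      (Nat.lt_succ_iff.mp (mem_range.mp hk)) h).1

theorem disjoint_rotationBlock (hs : s.Perm (range m)) (ht : t.Perm (range m)) (hst : s ≠ t) :
    (rotationBlock m s).Disjoint (rotationBlock m t) := by
  intro u hus hut
  obtain ⟨j, hj, rfl⟩ := mem_map.mp hus
  obtain ⟨k, hk, h⟩ := mem_map.mp hut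
  exact hst (rotate_append_singleton_inj_of_perm ht hs (by simpa [Nat.lt_succ_iff] using hk)
    (by simpa [Nat.lt_succ_iff] using hj) h).2.symm

theorem head?_rotationBlock : (rotationBlock m s).head? = some (s ++ [m]) := by
  simp [rotationBlock, range_succ_eq_map]

theorem getLast?_rotationBlock (hl : s.length = m) :
    (rotationBlock m s).getLast? = some (m :: s) := by
  rw [rotationBlock, range_succ, map_append, map_singleton, getLast?_concat,
    rotate_append_singleton s m hl.ge, drop_of_length_le hl.le, take_of_length_le hl.le,
    nil_append]

theorem overlap_rotate_one {u : List ℕ} (hu : u.Nodup) (h2 : 2 ≤ u.length) :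
    overlap u (u.rotate 1) = u.length - 1 := by
  obtain ⟨c, v, rfl⟩ := exists_cons_of_length_pos (by omega : 0 < u.length)
  obtain ⟨d, v, rfl⟩ := exists_cons_of_length_pos (by simp at h2; omega : 0 < v.length)
  have hcv : c ∉ d :: v := (nodup_cons.mp hu).1
  have hsuf : (d :: v ++ [c]).take (v.length + 1) <:+ c :: d :: v := by
    simp
  have hnot : ¬ (d :: v ++ [c]).take (v.length + 1 + 1) <:+ c :: d :: v := by
    intro h
    rw [take_of_length_le (by simp)] at h
    have := h.eq_of_length (by simp)
    simp only [cons_append, cons.injEq] at this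
    exact hcv (this.1 ▸ mem_cons_self)
  have hmin : min (c :: d :: v).length (d :: v ++ [c]).length = v.length + 1 + 1 := by simp
  unfold overlap
  rw [rotate_cons_succ, rotate_zero, hmin, Nat.findGreatest_of_not hnot,
    Nat.findGreatest_eq hsuf, length_cons, length_cons, Nat.add_sub_cancel]

theorem isChain_overlap_rotationBlock (hs : s.Perm (range m)) :
    (rotationBlock m s).IsChain fun a b => overlap a b = m := by
  have hnd : (s ++ [m]).Nodup := (append_singleton_perm_range_succ hs).nodup_iff.mpr nodup_range
  rw [rotationBlock, isChain_map, isChain_range_succ]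
  intro j hj
  have hlen : ((s ++ [m]).rotate j).length = m + 1 := by simp [length_of_perm_range hs]
  rw [Nat.succ_eq_add_one, ← rotate_rotate, overlap_rotate_one (nodup_rotate.mpr hnd) (by omega),
    hlen, Nat.add_sub_cancel]

theorem overlapSum_rotationBlock (hs : s.Perm (range m)) :
    overlapSum (rotationBlock m s) = m * m := by
  rw [overlapSum_of_isChain_overlap_eq (isChain_overlap_rotationBlock hs)]
  simp [rotationBlock]

theorem cleanJunction_of_overlap_eq {a b : List ℕ} (hm : 0 < m) (ha : a.length = m + 1)
    (h : overlap a b = m) : CleanJunction (m + 1) a b :=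
  ⟨h ▸ hm, by omega, fun t ht0 ht => by rw [ha, h] at ht; omega⟩

theorem isChain_rotationBlock (hm : 0 < m) (hs : s.Perm (range m)) :
    (rotationBlock m s).IsChain (CleanJunction (m + 1)) :=
  (isChain_overlap_rotationBlock hs).imp_of_mem_imp fun _ _ ha _ hab =>
    cleanJunction_of_overlap_eq hm
      (length_of_perm_range (perm_range_succ_of_mem_rotationBlock hs ha)) hab

theorem mirror_rotationBlock (hl : s.length = m) :
    mirror (rotationBlock m s) = rotationBlock m s.reverse := by
  refine ext_getElem (by simp [mirror, rotationBlock]) fun j h1 h2 => ?_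
  have hj : j < m + 1 := by simpa [rotationBlock] using h2
  simp only [mirror, rotationBlock, getElem_reverse, getElem_map, getElem_range, length_map,
    length_range]
  rw [reverse_rotate, reverse_append, reverse_singleton, singleton_append, length_append, hl,
    length_singleton, Nat.mod_eq_of_lt (by omega), show m + 1 - (m + 1 - 1 - j) = j + 1 by omega,
    rotate_cons_succ]

end RotationBlock

section Junction

variable {m : ℕ} {s t : List ℕ}

theorem overlap_cons_append_singleton {x : ℕ} (hx : x ∉ t) (hl : s.length = t.length)
    (ht : t ≠ []) : overlap (x :: s) (t ++ [x]) = overlap s t := by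
  have hnot : ¬ (t ++ [x]).take (t.length + 1) <:+ x :: s := by
    intro h
    rw [take_of_length_le (by simp)] at h
    obtain ⟨c, t, rfl⟩ := exists_cons_of_ne_nil ht
    have := h.eq_of_length (by simp [hl])
    simp only [cons_append, cons.injEq] at this
    exact hx (this.1 ▸ mem_cons_self)
  unfold overlap
  rw [show min (x :: s).length (t ++ [x]).length = t.length + 1 by simp [hl], hl, min_self,
    Nat.findGreatest_of_not hnot]
  refine Nat.findGreatest_congr fun k hk => ?_
  rw [take_append_of_le_length hk, suffix_cons_iff, or_iff_right]
  intro h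
  have := congrArg length h
  simp only [length_take, length_cons] at this
  omega

/-- Every window starting strictly inside this junction misses the letter `m`. -/
theorem CleanJunction.cons_append_singleton (hs : s.Perm (range m)) (ht : t.Perm (range m))
    (h : CleanJunction m s t) : CleanJunction (m + 1) (m :: s) (t ++ [m]) := by
  have hsl := length_of_perm_range hs
  have htl := length_of_perm_range ht
  have hv := h.overlap_lt
  have hvt := overlap_le_right s t
  have hov : overlap (m :: s) (t ++ [m]) = overlap s t :=
    overlap_cons_append_singleton (notMem_of_perm_range ht) (hsl.trans htl.symm)
      (ne_nil_of_length_pos (by have := h.overlap_pos; omega))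
  refine ⟨hov ▸ h.overlap_pos, by omega, fun i hi0 hi hp => ?_⟩
  rw [hov, length_cons, hsl] at hi
  obtain ⟨i, rfl⟩ := Nat.exists_eq_add_of_lt hi0
  have hglue : glueChain [m :: s, t ++ [m]] = m :: ((s ++ t.drop (overlap s t)) ++ [m]) := by
    rw [glueChain_cons_cons, hov, glueChain, drop_append_of_le_length hvt]
    simp
  have hmid : (s ++ t.drop (overlap s t)).length = 2 * m - overlap s t := by
    simp [hsl, htl]
    omega
  have hwin := hp.mem_iff.mpr (mem_range.mpr m.lt_succ_self)
  rw [hglue, zero_add, drop_succ_cons, drop_append_of_le_length (by omega),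
    take_append_of_le_length (by simp only [length_drop]; omega)] at hwin
  rcases mem_append.mp (mem_of_mem_drop (mem_of_mem_take hwin)) with hm | hm
  · exact notMem_of_perm_range hs hm
  · exact notMem_of_perm_range ht (mem_of_mem_drop hm)

end Junction

section Blocks

variable {m : ℕ} {S : List (List ℕ)}

theorem isChain_flatMap_rotationBlock (hm : 0 < m) (hperm : ∀ s ∈ S, s.Perm (range m))
    (hchain : S.IsChain (CleanJunction m)) :
    (S.flatMap (rotationBlock m)).IsChain (CleanJunction (m + 1)) := by
  rw [flatMap_def, isChain_flatten (by simp [rotationBlock]), isChain_map]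
  refine ⟨?_, hchain.imp_of_mem_imp fun s t hs ht hst => ?_⟩
  · simp only [mem_map, forall_exists_index, and_imp]
    rintro _ s hs rfl
    exact isChain_rotationBlock hm (hperm s hs)
  · rw [getLast?_rotationBlock (length_of_perm_range (hperm s hs)), head?_rotationBlock]
    simpa using hst.cons_append_singleton (hperm s hs) (hperm t ht)

theorem nodup_flatMap_rotationBlock (hperm : ∀ s ∈ S, s.Perm (range m)) (hS : S.Nodup) :
    (S.flatMap (rotationBlock m)).Nodup :=
  nodup_flatMap.mpr ⟨fun s hs => nodup_rotationBlock (hperm s hs),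
    hS.imp_of_mem fun hs ht hst => disjoint_rotationBlock (hperm _ hs) (hperm _ ht) hst⟩

theorem overlapSum_flatMap_rotationBlock (hm : 0 < m) (hperm : ∀ s ∈ S, s.Perm (range m)) :
    overlapSum (S.flatMap (rotationBlock m)) = S.length * (m * m) + overlapSum S := by
  induction S with
  | nil => simp [overlapSum]
  | cons s r ih =>
    have hs := hperm s mem_cons_self
    cases r with
    | nil => simp [overlapSum, overlapSum_rotationBlock hs]
    | cons t r =>
      have ht := hperm t (by simp)
      have hne : rotationBlock m s ≠ [] := by simp [rotationBlock]
      have hne' : (t :: r).flatMap (rotationBlock m) ≠ [] := by simp [rotationBlock]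
      have hlast : (rotationBlock m s).getLast hne = m :: s :=
        Option.some_inj.mp ((getLast?_eq_some_getLast hne).symm.trans
          (getLast?_rotationBlock (length_of_perm_range hs)))
      have hhead : ((t :: r).flatMap (rotationBlock m)).head hne' = t ++ [m] := by
        simp [rotationBlock, range_succ_eq_map]
      rw [flatMap_cons, overlapSum_append hne hne', hlast, hhead,
        ih fun u hu => hperm u (mem_cons_of_mem s hu), overlapSum_rotationBlock hs,
        overlap_cons_append_singleton (notMem_of_perm_range ht)
          (by rw [length_of_perm_range hs, length_of_perm_range ht])
          (ne_nil_of_length_pos (by rw [length_of_perm_range ht]; exact hm)),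
        overlapSum]
      simp only [length_cons]
      ring

theorem sum_map_of_forall_eq {α : Type*} {C : List α} {f : α → ℕ} {k : ℕ}
    (h : ∀ c ∈ C, f c = k) : (C.map f).sum = C.length * k := by
  rw [map_congr_left h, map_const', sum_replicate, smul_eq_mul]

/-- Each block has `(m + 1)²` letters, of which `m²` are absorbed by its inner overlaps, while the
junctions between blocks overlap exactly as before: so each of the `|S|` blocks adds `m + 1`
letters. -/
theorem length_glueChain_flatMap_rotationBlock (hm : 0 < m)
    (hperm : ∀ s ∈ S, s.Perm (range m)) :
    (glueChain (S.flatMap (rotationBlock m))).length =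
      (glueChain S).length + S.length * (m + 1) := by
  have hlen : ∀ u ∈ S.flatMap (rotationBlock m), u.length = m + 1 := fun u hu => by
    obtain ⟨s, hs, hu⟩ := mem_flatMap.mp hu
    exact length_of_perm_range (perm_range_succ_of_mem_rotationBlock (hperm s hs) hu)
  have hcount : (S.flatMap (rotationBlock m)).length = S.length * (m + 1) := by
    rw [length_flatMap, sum_map_of_forall_eq (k := m + 1) fun _ _ => by simp [rotationBlock]]
  have hold := length_glueChain_add_overlapSum S
  have hnew := length_glueChain_add_overlapSum (S.flatMap (rotationBlock m))
  rw [sum_map_of_forall_eq fun s hs => length_of_perm_range (hperm s hs)] at hold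
  rw [overlapSum_flatMap_rotationBlock hm hperm, sum_map_of_forall_eq hlen, hcount] at hnew
  nlinarith

theorem mirror_flatMap_rotationBlock (hl : ∀ s ∈ S, s.length = m) :
    mirror (S.flatMap (rotationBlock m)) = (mirror S).flatMap (rotationBlock m) := by
  simp only [mirror, flatMap_def, map_flatten, reverse_flatten, map_map, map_reverse]
  congr 2
  exact map_congr_left fun s hs => mirror_rotationBlock (hl s hs)

end Blocks

structure IsPermChain (m : ℕ) (S : List (List ℕ)) : Prop where
  pos : 0 < m
  perm_permutations : S.Perm (range m).permutations
  isChain : S.IsChain (CleanJunction m)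

namespace IsPermChain

variable {m : ℕ} {S : List (List ℕ)}

theorem mem_iff (h : IsPermChain m S) {s : List ℕ} : s ∈ S ↔ s.Perm (range m) :=
  h.perm_permutations.mem_iff.trans mem_permutations

theorem nodup (h : IsPermChain m S) : S.Nodup :=
  h.perm_permutations.nodup_iff.mpr (nodup_permutations _ nodup_range)

theorem length_eq (h : IsPermChain m S) : S.length = m.factorial := by
  rw [h.perm_permutations.length_eq, length_permutations, length_range]

theorem ne_nil (h : IsPermChain m S) : S ≠ [] :=
  ne_nil_of_mem (h.mem_iff.mpr (Perm.refl _))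

theorem firstAppear_glueChain (h : IsPermChain m S) : firstAppear m (glueChain S) = S :=
  _root_.firstAppear_glueChain h.pos h.ne_nil (fun _ => h.mem_iff.mp) h.isChain h.nodup

theorem isSuperpermNat (h : IsPermChain m S) : IsSuperpermNat m (glueChain S) := by
  intro σ
  refine infix_glueChain_of_mem (h.mem_iff.mpr ?_)
  have := σ.ofFn_comp_perm Fin.val
  rwa [ofFn_eq_map (f := Fin.val), map_coe_finRange_eq_range] at this

theorem flatMap_rotationBlock (h : IsPermChain m S) :
    IsPermChain (m + 1) (S.flatMap (rotationBlock m)) := by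
  have hperm : ∀ s ∈ S, s.Perm (range m) := fun _ => h.mem_iff.mp
  refine ⟨m.succ_pos, (perm_ext_iff_of_nodup (nodup_flatMap_rotationBlock hperm h.nodup)
    (nodup_permutations _ nodup_range)).mpr fun u => ?_,
    isChain_flatMap_rotationBlock h.pos hperm h.isChain⟩
  rw [mem_permutations, mem_flatMap]
  refine ⟨fun ⟨s, hs, hu⟩ => perm_range_succ_of_mem_rotationBlock (hperm s hs) hu,
    fun hu => ?_⟩
  obtain ⟨s, hs, hu⟩ := exists_mem_rotationBlock hu
  exact ⟨s, h.mem_iff.mpr hs, hu⟩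

end IsPermChain

/-- The permutations of `0, …, n` (level `n + 1`) in the order the construction visits them. -/
def permChain : ℕ → List (List ℕ)
  | 0 => [[0]]
  | n + 1 => (permChain n).flatMap (rotationBlock (n + 1))

theorem isPermChain_permChain (n : ℕ) : IsPermChain (n + 1) (permChain n) := by
  induction n with
  | zero => exact ⟨one_pos, by simp [permChain, permutations], isChain_singleton _⟩
  | succ n ih => exact ih.flatMap_rotationBlock

theorem superword_succ (n : ℕ) : superword (n + 1) = glueChain (permChain n) := by
  induction n with
  | zero => rfl
  | succ n ih =>
    rw [superword, ih, buildStep_eq, (isPermChain_permChain n).firstAppear_glueChain, permChain]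

theorem length_glueChain_permChain (n : ℕ) :
    (glueChain (permChain n)).length = ∑ i ∈ Finset.Icc 1 (n + 1), i.factorial := by
  induction n with
  | zero => rfl
  | succ n ih =>
    have h := isPermChain_permChain n
    rw [permChain, length_glueChain_flatMap_rotationBlock h.pos fun _ => h.mem_iff.mp, ih,
      h.length_eq, Finset.sum_Icc_succ_top (b := n + 1) (by omega), Nat.factorial_succ (n + 1)]
    ring

theorem mirror_permChain (n : ℕ) : mirror (permChain n) = permChain n := by
  induction n with
  | zero => rfl
  | succ n ih =>
    have h := isPermChain_permChain n
    rw [permChain, mirror_flatMap_rotationBlock fun s hs => length_of_perm_range (h.mem_iff.mp hs),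
      ih]

theorem stmt_19_general (n : ℕ) :
    IsSuperpermNat n (superword n) ∧
    (superword n).length = ∑ i ∈ Finset.Icc 1 n, Nat.factorial i ∧
    (superword n).reverse = superword n := by
  cases n with
  | zero => exact ⟨fun σ => by simp [superword], rfl, rfl⟩
  | succ n =>
    rw [superword_succ]
    exact ⟨(isPermChain_permChain n).isSuperpermNat, length_glueChain_permChain n,
      by rw [reverse_glueChain, mirror_permChain]⟩

theorem stmt_19 (n : ℕ) (hn : 1 ≤ n) :
    IsSuperpermNat n (superword n) ∧
    (superword n).length = ∑ i ∈ Finset.Icc 1 n, Nat.factorial i ∧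
    (superword n).reverse = superword n :=
  stmt_19_general n
end
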